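/- arXiv:2203.03425 — 6 statements merged into one kernel-verified Lean document; each statement's English description precedes it below -/
import Mathlib

section
/- Let τ be a finite relational vocabulary, K a countable commutative semiring, and p: K⁺ → (0,1] a probability distribution on K⁺ = K∖{0}. Then for every atomic m-type ρ and every atomic (m+1)-type ρ⁺ extending ρ, the probability under μ_{n,p} that every realisation of ρ in a random K-interpretation π on [n] can be extended to a realisation of ρ⁺ converges to 1 as n → ∞, and the convergence is exponentially fast (the failure probability is bounded by n^m(1−c)^{n−m} for some constant c > 0). Moreover, if K is finite then for every fixed k, the probability under μ_{n,p} that a random K-interpretation has the k-extension property converges to 1 exponentially fast. -/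
open MeasureTheory Filter Set
open scoped ENNReal BigOperators

/-- A (fully instantiated) literal over the relational vocabulary given by the
relation symbols `R` with arities `ar`, on the universe `A`: a relation symbol,
a tuple of arguments, and a polarity (`true` = positive atom, `false` = negated atom). -/
structure Lit (R : Type) (ar : R → ℕ) (A : Type) : Type where
  rel : R
  args : Fin (ar rel) → A
  pos : Bool

/-- A (fully instantiated) relational atom. -/
abbrev Atoms (R : Type) (ar : R → ℕ) (A : Type) : Type := (r : R) × (Fin (ar r) → A)

variable {R : Type} {ar : R → ℕ} {A B K : Type}

/-- Renaming of a literal along a map of universes. -/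
def Lit.map (f : A → B) (l : Lit R ar A) : Lit R ar B :=
  ⟨l.rel, fun j => f (l.args j), l.pos⟩

/-- A `K`-interpretation (or atomic type) is model-defining / consistent (w.r.t. the
zero element `z` of `K`) if out of each pair of complementary literals exactly one is
mapped to `z`. -/
def ModelDefining (z : K) (π : Lit R ar A → K) : Prop :=
  ∀ (r : R) (as : Fin (ar r) → A), (π ⟨r, as, true⟩ = z ↔ π ⟨r, as, false⟩ ≠ z)

/-- The atomic `m`-type realised by the tuple `a` in the interpretation `π`. -/
def typeOf {m : ℕ} (π : Lit R ar A → K) (a : Fin m → A) : Lit R ar (Fin m) → K :=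
  fun l => π (l.map a)

/-- The tuple `a` (of pairwise distinct elements) realises the atomic `m`-type `ρ` in `π`. -/
def Realizes {m : ℕ} (π : Lit R ar A → K) (a : Fin m → A) (ρ : Lit R ar (Fin m) → K) : Prop :=
  Function.Injective a ∧ typeOf π a = ρ

/-- The atomic `(m+1)`-type `ρp` extends the atomic `m`-type `ρ`. -/
def Extends {m : ℕ} (ρp : Lit R ar (Fin (m+1)) → K) (ρ : Lit R ar (Fin m) → K) : Prop :=
  ∀ l : Lit R ar (Fin m), ρp (l.map Fin.castSucc) = ρ l

/-- The `k`-extension property of an interpretation `π` (with zero element `z`). -/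
def ExtProp (z : K) (π : Lit R ar A → K) (k : ℕ) : Prop :=
  ∀ m, m < k → ∀ ρ : Lit R ar (Fin m) → K, ModelDefining z ρ →
    ∀ ρp : Lit R ar (Fin (m+1)) → K, ModelDefining z ρp → Extends ρp ρ →
      ∀ a : Fin m → A, Realizes π a ρ →
        ∃ b : A, b ∉ Set.range a ∧ Realizes π (Fin.snoc a b) ρp

/-- A sequence of extended nonnegative reals converges to `L` exponentially fast. -/
def ExpConv (f : ℕ → ℝ≥0∞) (L : ℝ≥0∞) : Prop :=
  ∃ C q : ℝ≥0∞, C ≠ ⊤ ∧ q < 1 ∧ ∀ n, f n ≤ L + C * q ^ n ∧ L ≤ f n + C * q ^ n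

/-- The interpretation determined by a sample point: each atom gets a pair
(value of positive literal, value of negated literal). -/
def interpOf (ω : Atoms R ar A → K × K) : Lit R ar A → K :=
  fun l => if l.pos then (ω ⟨l.rel, l.args⟩).1 else (ω ⟨l.rel, l.args⟩).2

/-- The per-atom distribution: with probability 1/2 the atom is true (its negation
gets value `z`, i.e. false, and its value is sampled from `p`), with probability 1/2
it is false (symmetrically). -/
noncomputable def atomMeasure [MeasurableSpace K] (z : K) (p : Measure K) : Measure (K × K) :=
  (2⁻¹ : ℝ≥0∞) • (Measure.map (fun j => (j, z)) p + Measure.map (fun j => (z, j)) p)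

/-- The distribution `μ_{n,p}` of random `K`-interpretations on universe `[n]`,
presented on the sample space assigning to each atom the pair of values of its
positive and negated literal. -/
noncomputable def muI [MeasurableSpace K] [Fintype R] (z : K) (p : Measure K) (n : ℕ) :
    Measure (Atoms R ar (Fin n) → K × K) :=
  Measure.pi fun _ => atomMeasure z p

/-!
Fix a realisation `a` of `ρ` in `[n]`. For `b ∉ a`, the tuple `(a, b)` realises `ρ⁺` as soon as
every atom built from `a` and `b` that mentions `b` receives the value pair prescribed by `ρ⁺`;
this has a probability `c > 0` not depending on `b`. For distinct `b` these sets of atoms are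
disjoint, so the events are independent and all `n - m` of them fail with probability
`(1 - c) ^ (n - m)`. A union bound over the `n ^ m` tuples `a` gives the first bound, and
`n ^ m (1 - c) ^ (n - m)` decays geometrically. For finite `K` there are only finitely many pairs
`(ρ, ρ⁺)` of arity below `k`, and a finite sum of geometrically decaying sequences decays
geometrically.
-/

open ProbabilityTheory

def GeometricallyBounded (f : ℕ → ℝ≥0∞) : Prop :=
  ∃ C q : ℝ≥0∞, C ≠ ⊤ ∧ q < 1 ∧ ∀ n, f n ≤ C * q ^ n

namespace GeometricallyBounded

lemma mono {f g : ℕ → ℝ≥0∞} (hg : GeometricallyBounded g) (hfg : ∀ n, f n ≤ g n) :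
    GeometricallyBounded f := by
  obtain ⟨C, q, hC, hq, hg⟩ := hg
  exact ⟨C, q, hC, hq, fun n => (hfg n).trans (hg n)⟩

lemma zero : GeometricallyBounded 0 :=
  ⟨0, 0, ENNReal.zero_ne_top, zero_lt_one, fun n => by simp⟩

lemma add {f g : ℕ → ℝ≥0∞} (hf : GeometricallyBounded f) (hg : GeometricallyBounded g) :
    GeometricallyBounded (f + g) := by
  obtain ⟨C, q, hC, hq, hf⟩ := hf
  obtain ⟨D, r, hD, hr, hg⟩ := hg
  refine ⟨C + D, max q r, ENNReal.add_ne_top.2 ⟨hC, hD⟩, max_lt hq hr, fun n => ?_⟩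
  calc f n + g n ≤ C * q ^ n + D * r ^ n := add_le_add (hf n) (hg n)
    _ ≤ C * max q r ^ n + D * max q r ^ n := by gcongr <;> simp
    _ = (C + D) * max q r ^ n := (add_mul _ _ _).symm

lemma finset_sum {ι : Type*} (s : Finset ι) {f : ι → ℕ → ℝ≥0∞}
    (hf : ∀ i ∈ s, GeometricallyBounded (f i)) : GeometricallyBounded (∑ i ∈ s, f i) :=
  Finset.sum_induction f _ (fun _ _ => add) zero hf

lemma const_mul {f : ℕ → ℝ≥0∞} (hf : GeometricallyBounded f) {c : ℝ≥0∞} (hc : c ≠ ⊤) :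
    GeometricallyBounded fun n => c * f n := by
  obtain ⟨C, q, hC, hq, hf⟩ := hf
  refine ⟨c * C, q, ENNReal.mul_ne_top hc hC, hq, fun n => ?_⟩
  rw [mul_assoc]
  exact mul_le_mul_right (hf n) c

lemma natCast_pow_mul_pow (m : ℕ) {r : ℝ≥0∞} (hr : r < 1) :
    GeometricallyBounded fun n => (n : ℝ≥0∞) ^ m * r ^ n := by
  obtain ⟨q, hrq, hq⟩ := exists_between hr
  have hq0 : q ≠ 0 := (zero_le.trans_lt hrq).ne'
  have hs : r / q < 1 := (ENNReal.div_lt_iff (Or.inl hq0) (Or.inl hq.ne_top)).2 (by simpa)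
  obtain ⟨M, hM⟩ := (tendsto_pow_const_mul_const_pow_of_lt_one m ENNReal.toReal_nonneg
    (ENNReal.toReal_lt_of_lt_ofReal (by simpa))).bddAbove_range
  refine ⟨ENNReal.ofReal M, q, ENNReal.ofReal_ne_top, hq, fun n => ?_⟩
  calc (n : ℝ≥0∞) ^ m * r ^ n = (n : ℝ≥0∞) ^ m * (r / q) ^ n * q ^ n := by
        rw [mul_assoc, ← mul_pow, ENNReal.div_mul_cancel hq0 hq.ne_top]
    _ = ENNReal.ofReal ((n : ℝ) ^ m * (r / q).toReal ^ n) * q ^ n := by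
        rw [ENNReal.ofReal_mul (by positivity), ENNReal.ofReal_pow (by positivity),
          ENNReal.ofReal_pow ENNReal.toReal_nonneg, ENNReal.ofReal_natCast,
          ENNReal.ofReal_toReal hs.ne_top]
    _ ≤ ENNReal.ofReal M * q ^ n := by gcongr; exact hM ⟨n, rfl⟩

lemma natCast_pow_mul_pow_sub (m : ℕ) {r : ℝ≥0∞} (hr : r < 1) :
    GeometricallyBounded fun n => (n : ℝ≥0∞) ^ m * r ^ (n - m) := by
  -- enlarging `r` to `s = max r 2⁻¹` makes it invertible
  set s := max r 2⁻¹
  have hs0 : s ≠ 0 := (ENNReal.inv_pos.2 ENNReal.ofNat_ne_top).trans_le (le_max_right _ _) |>.ne'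
  have hs1 : s ≤ 1 := max_le hr.le (by norm_num)
  refine ((natCast_pow_mul_pow m (r := s) (max_lt hr (by norm_num))).const_mul
    (ENNReal.inv_ne_top.2 (pow_ne_zero m hs0))).mono fun n => ?_
  have hpow : s ^ (n - m) * s ^ m ≤ s ^ n := by
    rw [← pow_add]; exact pow_le_pow_right_of_le_one' hs1 (by omega)
  calc (n : ℝ≥0∞) ^ m * r ^ (n - m) ≤ (n : ℝ≥0∞) ^ m * s ^ (n - m) := by
        gcongr; exact le_max_left _ _
    _ ≤ (n : ℝ≥0∞) ^ m * ((s ^ m)⁻¹ * s ^ n) := by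
        gcongr
        rw [mul_comm, ← div_eq_mul_inv]
        exact (ENNReal.le_div_iff_mul_le (Or.inl (pow_ne_zero m hs0))
          (Or.inr (ENNReal.pow_ne_top (hs1.trans_lt ENNReal.one_lt_top).ne))).2 hpow
    _ = (s ^ m)⁻¹ * ((n : ℝ≥0∞) ^ m * s ^ n) := by ring

end GeometricallyBounded

section ProductMeasure

variable {ι β δ γ : Type*} [Fintype ι] [Fintype β] [Fintype δ] [MeasurableSpace γ]
  (ν : Measure γ) [IsProbabilityMeasure ν]

lemma measurePreserving_pi_comp {e : β → ι} (he : Function.Injective e) :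
    MeasurePreserving (fun ω : ι → γ => ω ∘ e) (Measure.pi fun _ => ν)
      (Measure.pi fun _ => ν) := by
  have hmap := ((iIndepFun_pi (μ := fun _ : ι => ν) (X := fun _ x => x)
    fun _ => aemeasurable_id).precomp he).map_fun_eq_pi_map
    fun _ => (measurable_pi_apply _).aemeasurable
  refine ⟨by fun_prop, ?_⟩
  simpa [Function.comp_def, (measurePreserving_eval (fun _ : ι => ν) _).map_eq] using hmap

lemma measurePreserving_curry :
    MeasurePreserving (MeasurableEquiv.curry β δ γ) (Measure.pi fun _ => ν)
      (Measure.pi fun _ => Measure.pi fun _ => ν) := by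
  refine MeasurePreserving.symm _ ⟨(MeasurableEquiv.curry β δ γ).symm.measurable, ?_⟩
  refine (Measure.pi_eq fun s hs => ?_).symm
  have hpre : (MeasurableEquiv.curry β δ γ).symm ⁻¹' Set.univ.pi s
      = Set.univ.pi fun b => Set.univ.pi fun d => s (b, d) := by
    ext; simp [MeasurableEquiv.coe_curry_symm]
  rw [Measure.map_apply (MeasurableEquiv.measurable _) (MeasurableSet.univ_pi hs), hpre,
    Measure.pi_pi, Fintype.prod_prod_type]
  simp_rw [Measure.pi_pi]

lemma measure_pi_forall_ne [MeasurableSingletonClass γ] {e : β × δ → ι}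
    (he : Function.Injective e) (v : δ → γ) :
    Measure.pi (fun _ => ν) {ω | ∀ b, (fun d => ω (e (b, d))) ≠ v}
      = (1 - ∏ d, ν {v d}) ^ Fintype.card β := by
  have hΦ := (measurePreserving_curry ν).comp (measurePreserving_pi_comp ν he)
  have hset : {ω : ι → γ | ∀ b, (fun d => ω (e (b, d))) ≠ v}
      = (MeasurableEquiv.curry β δ γ ∘ fun ω => ω ∘ e) ⁻¹' Set.univ.pi fun _ => {v}ᶜ := by
    ext; simp [MeasurableEquiv.coe_curry]; rfl
  rw [hset, hΦ.measure_preimage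
    (MeasurableSet.univ_pi fun _ => (measurableSet_singleton v).compl).nullMeasurableSet,
    Measure.pi_pi, prob_compl_eq_one_sub (measurableSet_singleton v), Measure.pi_singleton,
    Finset.prod_const, Finset.card_univ]

end ProductMeasure

section AtomMeasure

variable [MeasurableSpace K] (p : Measure K)

instance (z : K) [IsProbabilityMeasure p] : IsProbabilityMeasure (atomMeasure z p) := by
  have : IsProbabilityMeasure (p.map fun j => (j, z)) :=
    Measure.isProbabilityMeasure_map (by fun_prop)
  have : IsProbabilityMeasure (p.map fun j => (z, j)) :=
    Measure.isProbabilityMeasure_map (by fun_prop)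
  constructor
  rw [atomMeasure, Measure.smul_apply, Measure.add_apply, measure_univ, measure_univ,
    one_add_one_eq_two, smul_eq_mul, ENNReal.inv_mul_cancel two_ne_zero ENNReal.ofNat_ne_top]

instance [Fintype R] (z : K) [IsProbabilityMeasure p] (n : ℕ) :
    IsProbabilityMeasure (muI (ar := ar) z p n) := by
  rw [muI]; infer_instance

lemma atomMeasure_singleton_pos [Zero K] [MeasurableSingletonClass K]
    (hp : ∀ j : K, j ≠ 0 → 0 < p {j}) {x y : K} (hxy : x = 0 ↔ y ≠ 0) :
    0 < atomMeasure 0 p {(x, y)} := by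
  rw [atomMeasure, Measure.smul_apply, Measure.add_apply, smul_eq_mul,
    Measure.map_apply (by fun_prop) (measurableSet_singleton _),
    Measure.map_apply (by fun_prop) (measurableSet_singleton _)]
  refine ENNReal.mul_pos (by simp) (ne_of_gt ?_)
  by_cases hx : x = 0
  · subst hx
    have hpre : (fun j => ((0 : K), j)) ⁻¹' {(0, y)} = {y} := by ext; simp
    exact hpre ▸ (hp y (hxy.1 rfl)).trans_le le_add_self
  · have hpre : (fun j => (j, (0 : K))) ⁻¹' {(x, y)} = {x} := by
      ext; simp [not_not.1 (mt hxy.2 hx)]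
    exact hpre ▸ (hp x hx).trans_le le_self_add

end AtomMeasure

def Atoms.map (f : A → B) : Atoms R ar A → Atoms R ar B :=
  Sigma.map id fun _ => (f ∘ ·)

lemma Atoms.map_injective {f : A → B} (hf : Function.Injective f) :
    Function.Injective (Atoms.map (R := R) (ar := ar) f) :=
  Function.injective_id.sigma_map fun _ => hf.comp_left

def atomValues (ρ : Lit R ar A → K) (q : Atoms R ar A) : K × K :=
  (ρ ⟨q.1, q.2, true⟩, ρ ⟨q.1, q.2, false⟩)

def lastAtoms (R : Type) [Fintype R] (ar : R → ℕ) (m : ℕ) :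
    Finset (Atoms R ar (Fin (m + 1))) :=
  {q | ∃ j, q.2 j = Fin.last m}

def AllRealizationsExtend {m : ℕ} (π : Lit R ar A → K) (ρ : Lit R ar (Fin m) → K)
    (ρp : Lit R ar (Fin (m + 1)) → K) : Prop :=
  ∀ a : Fin m → A, Realizes π a ρ → ∃ b : A, b ∉ range a ∧ Realizes π (Fin.snoc a b) ρp

section Realizations

variable [Fintype R] {m : ℕ} {ρ : Lit R ar (Fin m) → K} {ρp : Lit R ar (Fin (m + 1)) → K}

lemma realizes_snoc_of_lastAtoms (hext : Extends ρp ρ) {ω : Atoms R ar A → K × K}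
    {a : Fin m → A} {b : A} (ha : Realizes (interpOf ω) a ρ) (hb : b ∉ range a)
    (hω : ∀ q ∈ lastAtoms R ar m, ω (Atoms.map (Fin.snoc a b) q) = atomValues ρp q) :
    Realizes (interpOf ω) (Fin.snoc a b) ρp := by
  refine ⟨Fin.snoc_injective_of_injective ha.1 hb, funext fun ⟨r, as, pos⟩ => ?_⟩
  by_cases hl : ∃ j, as j = Fin.last m
  · have h := hω ⟨r, as⟩ (by simpa [lastAtoms] using hl)
    cases pos
    · exact congrArg Prod.snd h
    · exact congrArg Prod.fst h
  · obtain ⟨as', rfl⟩ : ∃ as' : Fin (ar r) → Fin m, as = Fin.castSucc ∘ as' :=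
      ⟨fun j => (as j).castPred fun h => hl ⟨j, h⟩,
        funext fun j => (Fin.castSucc_castPred _ _).symm⟩
    have h := congrFun ha.2 ⟨r, as', pos⟩
    rw [← hext] at h
    simpa [typeOf, Lit.map, Function.comp_def] using h

lemma snoc_lastAtoms_injective {a : Fin m → A} (ha : Function.Injective a) :
    Function.Injective fun x : {b // b ∉ range a} × lastAtoms R ar m =>
      Atoms.map (Fin.snoc a x.1) x.2.1 := by
  rintro ⟨⟨b, hb⟩, q, hq⟩ ⟨⟨b', hb'⟩, q', hq'⟩ h
  obtain ⟨j, hj⟩ : ∃ j, q.2 j = Fin.last m := by simpa [lastAtoms] using hq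
  change Atoms.map (Fin.snoc a b) q = Atoms.map (Fin.snoc a b') q' at h
  have hmem : b ∈ range (Atoms.map (Fin.snoc a b') q').2 := by
    rw [← h]
    exact ⟨j, show (Fin.snoc a b : Fin (m + 1) → A) (q.2 j) = b by rw [hj, Fin.snoc_last]⟩
  have hbb' : b = b' := by
    have := Set.range_comp_subset_range q'.2 (Fin.snoc a b') hmem
    simp only [Fin.range_snoc, mem_insert_iff] at this
    exact this.resolve_right hb
  subst hbb'
  have := Atoms.map_injective (Fin.snoc_injective_of_injective ha hb) h
  subst this
  rfl

end Realizations

section MainBound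

variable [Fintype R] [Zero K] [MeasurableSpace K] [MeasurableSingletonClass K]
  (p : Measure K) [IsProbabilityMeasure p] {m : ℕ} {ρ : Lit R ar (Fin m) → K}
  {ρp : Lit R ar (Fin (m + 1)) → K}

lemma measure_realizes_forall_not_realizes_snoc_le (hext : Extends ρp ρ) {n : ℕ}
    (a : Fin m → Fin n) :
    muI (ar := ar) 0 p n {ω | Realizes (interpOf ω) a ρ ∧
        ∀ b, b ∉ range a → ¬ Realizes (interpOf ω) (Fin.snoc a b) ρp}
      ≤ (1 - ∏ q ∈ lastAtoms R ar m, atomMeasure 0 p {atomValues ρp q}) ^ (n - m) := by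
  by_cases ha : Function.Injective a
  swap
  · simp [Realizes, ha]
  calc _ ≤ muI (ar := ar) 0 p n {ω | ∀ b : {b // b ∉ range a},
          (fun q : lastAtoms R ar m => ω (Atoms.map (Fin.snoc a b.1) q.1))
            ≠ fun q => atomValues ρp q.1} := by
        refine measure_mono fun ω ⟨hρ, hfail⟩ ⟨b, hb⟩ hω => hfail b hb ?_
        exact realizes_snoc_of_lastAtoms hext hρ hb fun q hq => congrFun hω ⟨q, hq⟩
    _ = _ := by
        rw [muI, measure_pi_forall_ne _ (snoc_lastAtoms_injective ha)]
        congr 2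
        · exact Finset.prod_coe_sort _ fun q => atomMeasure 0 p {atomValues ρp q}
        · rw [Fintype.card_subtype_compl, Fintype.card_fin, Set.card_range_of_injective ha,
            Fintype.card_fin]

lemma exists_measure_not_allRealizationsExtend_le (hp : ∀ j : K, j ≠ 0 → 0 < p {j})
    (hρp : ModelDefining (0 : K) ρp) (hext : Extends ρp ρ) :
    ∃ c : ℝ≥0∞, 0 < c ∧ c ≤ 1 ∧ ∀ n : ℕ,
      muI (ar := ar) 0 p n {ω | ¬ AllRealizationsExtend (interpOf ω) ρ ρp}
        ≤ (n : ℝ≥0∞) ^ m * (1 - c) ^ (n - m) := by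
  refine ⟨∏ q ∈ lastAtoms R ar m, atomMeasure 0 p {atomValues ρp q},
    CanonicallyOrderedAdd.prod_pos.2 fun q _ => atomMeasure_singleton_pos p hp (hρp _ _),
    Finset.prod_le_one (fun _ _ => zero_le) fun _ _ => prob_le_one, fun n => ?_⟩
  calc _ ≤ muI (ar := ar) 0 p n (⋃ a : Fin m → Fin n, {ω | Realizes (interpOf ω) a ρ ∧
        ∀ b, b ∉ range a → ¬ Realizes (interpOf ω) (Fin.snoc a b) ρp}) := by
        refine measure_mono fun ω hω => ?_
        simp only [AllRealizationsExtend, not_forall, not_exists, not_and] at hω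
        obtain ⟨a, hρ, hfail⟩ := hω
        exact mem_iUnion.2 ⟨a, hρ, hfail⟩
    _ ≤ ∑ a : Fin m → Fin n, muI (ar := ar) 0 p n {ω | Realizes (interpOf ω) a ρ ∧
        ∀ b, b ∉ range a → ¬ Realizes (interpOf ω) (Fin.snoc a b) ρp} :=
        measure_iUnion_fintype_le _ _
    _ ≤ ∑ _a : Fin m → Fin n, _ :=
        Finset.sum_le_sum fun a _ => measure_realizes_forall_not_realizes_snoc_le p hext a
    _ = _ := by simp

end MainBound

lemma GeometricallyBounded.expConv_measure_one {Ω : ℕ → Type*} [∀ n, MeasurableSpace (Ω n)]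
    {μ : ∀ n, Measure (Ω n)} [∀ n, IsProbabilityMeasure (μ n)] {s : ∀ n, Set (Ω n)}
    (h : GeometricallyBounded fun n => μ n (s n)ᶜ) : ExpConv (fun n => μ n (s n)) 1 := by
  obtain ⟨C, q, hC, hq, h⟩ := h
  refine ⟨C, q, hC, hq, fun n => ⟨prob_le_one.trans le_self_add, ?_⟩⟩
  calc 1 = μ n univ := measure_univ.symm
    _ ≤ μ n (s n) + μ n (s n)ᶜ := measure_univ_le_add_compl _
    _ ≤ μ n (s n) + C * q ^ n := by gcongr; exact h n

instance Lit.instFinite [Finite R] [Finite A] : Finite (Lit R ar A) :=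
  Finite.of_equiv (Atoms R ar A × Bool)
    ⟨fun x => ⟨x.1.1, x.1.2, x.2⟩, fun l => (⟨l.rel, l.args⟩, l.pos), fun _ => rfl, fun _ => rfl⟩

section Asymptotics

variable [Fintype R] [Zero K] [MeasurableSpace K] [MeasurableSingletonClass K]
  (p : Measure K) [IsProbabilityMeasure p] (hp : ∀ j : K, j ≠ 0 → 0 < p {j})
include hp

lemma geometricallyBounded_not_allRealizationsExtend {m : ℕ} {ρ : Lit R ar (Fin m) → K}
    {ρp : Lit R ar (Fin (m + 1)) → K} (hρp : ModelDefining (0 : K) ρp) (hext : Extends ρp ρ) :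
    GeometricallyBounded fun n =>
      muI (ar := ar) 0 p n {ω | ¬ AllRealizationsExtend (interpOf ω) ρ ρp} := by
  obtain ⟨c, hc0, -, hbound⟩ := exists_measure_not_allRealizationsExtend_le p hp hρp hext
  exact (GeometricallyBounded.natCast_pow_mul_pow_sub m
    (ENNReal.sub_lt_self ENNReal.one_ne_top one_ne_zero hc0.ne')).mono hbound

lemma geometricallyBounded_not_extProp [Finite K] (k : ℕ) :
    GeometricallyBounded fun n =>
      muI (ar := ar) 0 p n {ω | ¬ ExtProp (0 : K) (interpOf ω) k} := by
  let I := Σ m : Fin k, {x : (Lit R ar (Fin m) → K) × (Lit R ar (Fin (m + 1)) → K) //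
    ModelDefining (0 : K) x.2 ∧ Extends x.2 x.1}
  have := Fintype.ofFinite I
  refine (GeometricallyBounded.finset_sum Finset.univ fun (i : I) _ =>
    geometricallyBounded_not_allRealizationsExtend p hp i.2.2.1 i.2.2.2).mono fun n => ?_
  calc _ ≤ muI (ar := ar) 0 p n (⋃ i : I,
        {ω | ¬ AllRealizationsExtend (interpOf ω) i.2.1.1 i.2.1.2}) := by
        refine measure_mono fun ω hω => ?_
        by_contra hnot
        exact hω fun m hm ρ _ ρp hρp hext => by_contra fun h =>
          hnot (mem_iUnion.2 ⟨⟨⟨m, hm⟩, (ρ, ρp), hρp, hext⟩, h⟩)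
    _ ≤ _ := by rw [Finset.sum_apply]; exact measure_iUnion_fintype_le _ _

end Asymptotics

theorem statement_0_general
    {R : Type} [Fintype R] {ar : R → ℕ}
    {K : Type} [CommSemiring K]
    [MeasurableSpace K] [MeasurableSingletonClass K]
    (p : Measure K) [IsProbabilityMeasure p]
    (hppos : ∀ j : K, j ≠ 0 → 0 < p {j})
    {m : ℕ} (ρ : Lit R ar (Fin m) → K)
    (ρp : Lit R ar (Fin (m+1)) → K) (hρp : ModelDefining (0 : K) ρp)
    (hext : Extends ρp ρ) :
    (∃ c : ℝ≥0∞, 0 < c ∧ c ≤ 1 ∧ ∀ n : ℕ,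
      muI (ar := ar) (0 : K) p n
          {ω | ¬ ∀ a : Fin m → Fin n, Realizes (interpOf ω) a ρ →
              ∃ b : Fin n, b ∉ Set.range a ∧ Realizes (interpOf ω) (Fin.snoc a b) ρp}
        ≤ (n : ℝ≥0∞) ^ m * (1 - c) ^ (n - m)) ∧
    ExpConv (fun n =>
      muI (ar := ar) (0 : K) p n
        {ω | ∀ a : Fin m → Fin n, Realizes (interpOf ω) a ρ →
            ∃ b : Fin n, b ∉ Set.range a ∧ Realizes (interpOf ω) (Fin.snoc a b) ρp}) 1 ∧
    (Finite K → ∀ k : ℕ,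
      ExpConv (fun n =>
        muI (ar := ar) (0 : K) p n {ω | ExtProp (0 : K) (interpOf ω) k}) 1) := by
  refine ⟨exists_measure_not_allRealizationsExtend_le p hppos hρp hext, ?_, fun _ k => ?_⟩
  · exact (geometricallyBounded_not_allRealizationsExtend p hppos hρp hext).expConv_measure_one
  · exact (geometricallyBounded_not_extProp p hppos k).expConv_measure_one

/-- For a finite relational vocabulary, a countable commutative
semiring `K` and a probability distribution `p` on `K⁺ = K ∖ {0}` (positive on every
nonzero element), the probability that every realisation of an atomic `m`-type `ρ`
in a random `K`-interpretation on `[n]` can be extended to a realisation of a given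
extension `ρ⁺` converges to 1, exponentially fast: the failure probability is bounded
by `n^m (1-c)^(n-m)` for some constant `c > 0`.  Moreover, if `K` is finite then for
every fixed `k`, random `K`-interpretations have the `k`-extension property with
probability converging to 1 exponentially fast. -/
theorem statement_0
    {R : Type} [Fintype R] {ar : R → ℕ}
    {K : Type} [CommSemiring K] [Countable K]
    [MeasurableSpace K] [MeasurableSingletonClass K]
    (p : Measure K) [IsProbabilityMeasure p]
    (hp0 : p {(0 : K)} = 0) (hppos : ∀ j : K, j ≠ 0 → 0 < p {j})
    {m : ℕ} (ρ : Lit R ar (Fin m) → K) (hρ : ModelDefining (0 : K) ρ)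
    (ρp : Lit R ar (Fin (m+1)) → K) (hρp : ModelDefining (0 : K) ρp)
    (hext : Extends ρp ρ) :
    (∃ c : ℝ≥0∞, 0 < c ∧ c ≤ 1 ∧ ∀ n : ℕ,
      muI (ar := ar) (0 : K) p n
          {ω | ¬ ∀ a : Fin m → Fin n, Realizes (interpOf ω) a ρ →
              ∃ b : Fin n, b ∉ Set.range a ∧ Realizes (interpOf ω) (Fin.snoc a b) ρp}
        ≤ (n : ℝ≥0∞) ^ m * (1 - c) ^ (n - m)) ∧
    ExpConv (fun n =>
      muI (ar := ar) (0 : K) p n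
        {ω | ∀ a : Fin m → Fin n, Realizes (interpOf ω) a ρ →
            ∃ b : Fin n, b ∉ Set.range a ∧ Realizes (interpOf ω) (Fin.snoc a b) ρp}) 1 ∧
    (Finite K → ∀ k : ℕ,
      ExpConv (fun n =>
        muI (ar := ar) (0 : K) p n {ω | ExtProp (0 : K) (interpOf ω) k}) 1) :=
  statement_0_general p hppos ρ ρp hρp hext
end

section
/- Let (K,⊔,⊓,0,1) be a finite lattice semiring, τ a finite relational vocabulary and k ∈ ω. Then for every K-interpretation π: Lit_A(τ) → K with the k-extension property, every formula ψ(x_1,…,x_i) ∈ FO^k(τ) (at most k variables) and every tuple ā = (a_1,…,a_i) of pairwise distinct elements of A: π⟦ψ(ā)⟧ = f_ψ[ρ^π_ā], where f_ψ is evaluated with e ↦ ε_K and X_β ↦ ρ^π_ā(β). -/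
/-! Induction on `ψ`; only the quantifier steps need an argument. Write `ρ = ρ^π_ā` and, for a
selector `s` and a value `κ`, let `ρ[s ↦ κ]` be the extension of `ρ` giving value `κ` to the new
literals chosen by `s` and `0` to their complements.

For a fresh `b`, model-definingness singles out a selector `s_b` (the nonzero literal of each new
pair), and since every nonzero value lies between `ε_K` and `1`, the type of `(ā, b)` lies between
`ρ[s_b ↦ ε_K]` and `ρ[s_b ↦ 1]`. Monotonicity of `f_φ` gives `π⟦∃≠y φ⟧ ≤ f_{∃≠y φ}[ρ]` and
`f_{∀≠y φ}[ρ] ≤ π⟦∀≠y φ⟧`.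

Conversely, for every nonzero `κ` the `k`-extension property realises `ρ[s ↦ κ]`. With `κ = 1`
this settles `∃≠`. For `∀≠` it gives `π⟦∀≠y φ⟧ ≤ ⨅_{κ ≠ 0} f_φ[ρ[s ↦ κ]]`; the map
`κ ↦ f_φ[ρ[s ↦ κ]]` is a unary lattice polynomial `c ⊔ (κ ⊓ d)`, so it commutes with this nonempty
infimum, which is `ε_K` (itself possibly `0`, hence not realisable). -/

open MeasureTheory Filter Set
open scoped ENNReal BigOperators

variable {R : Type} {ar : R → ℕ} {A B K : Type}

/-- First-order formulae in negation normal form over the vocabulary `(R, ar)`,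
written with the *excluding* quantifiers `∃≠` (`exq`) and `∀≠` (`allq`) which range
only over elements distinct from the values of all variables currently in scope. -/
inductive FOx (R : Type) (ar : R → ℕ) : ℕ → Type
  | eq   : {i : ℕ} → Fin i → Fin i → FOx R ar i
  | ne   : {i : ℕ} → Fin i → Fin i → FOx R ar i
  | atom : {i : ℕ} → (r : R) → (Fin (ar r) → Fin i) → Bool → FOx R ar i
  | or   : {i : ℕ} → FOx R ar i → FOx R ar i → FOx R ar i
  | and  : {i : ℕ} → FOx R ar i → FOx R ar i → FOx R ar i
  | exq  : {i : ℕ} → FOx R ar (i+1) → FOx R ar i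
  | allq : {i : ℕ} → FOx R ar (i+1) → FOx R ar i

/-- The width of a formula: the maximal number of variables simultaneously in scope.
A formula `ψ : FOx R ar i` with `ψ.width ≤ k` is a formula of the `k`-variable
fragment `FO^k`. -/
def FOx.width : {i : ℕ} → FOx R ar i → ℕ
  | i, .eq _ _ => i
  | i, .ne _ _ => i
  | i, .atom _ _ _ => i
  | _, .or φ θ => max φ.width θ.width
  | _, .and φ θ => max φ.width θ.width
  | _, .exq φ => φ.width
  | _, .allq φ => φ.width

/-- Semantics of formulae with excluding quantifiers in a lattice semiring. -/
noncomputable def evalLx [DistribLattice K] [BoundedOrder K] [Fintype A] [DecidableEq A]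
    (π : Lit R ar A → K) : {i : ℕ} → FOx R ar i → (Fin i → A) → K
  | _, .eq j l, v => if v j = v l then ⊤ else ⊥
  | _, .ne j l, v => if v j = v l then ⊥ else ⊤
  | _, .atom r as pos, v => π ⟨r, fun j => v (as j), pos⟩
  | _, .or φ θ, v => evalLx π φ v ⊔ evalLx π θ v
  | _, .and φ θ, v => evalLx π φ v ⊓ evalLx π θ v
  | _, .exq φ, v => (Finset.univ.filter fun b : A => ∀ j, v j ≠ b).sup
      fun b => evalLx π φ (Fin.snoc v b)
  | _, .allq φ, v => (Finset.univ.filter fun b : A => ∀ j, v j ≠ b).inf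
      fun b => evalLx π φ (Fin.snoc v b)

/-- Semantics of formulae with excluding quantifiers in a commutative semiring. -/
noncomputable def evalSx [CommSemiring K] [Fintype A] [DecidableEq A]
    (π : Lit R ar A → K) : {i : ℕ} → FOx R ar i → (Fin i → A) → K
  | _, .eq j l, v => if v j = v l then 1 else 0
  | _, .ne j l, v => if v j = v l then 0 else 1
  | _, .atom r as pos, v => π ⟨r, fun j => v (as j), pos⟩
  | _, .or φ θ, v => evalSx π φ v + evalSx π θ v
  | _, .and φ θ, v => evalSx π φ v * evalSx π θ v
  | _, .exq φ, v => ∑ b ∈ (Finset.univ.filter fun b : A => ∀ j, v j ≠ b),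
      evalSx π φ (Fin.snoc v b)
  | _, .allq φ, v => ∏ b ∈ (Finset.univ.filter fun b : A => ∀ j, v j ≠ b),
      evalSx π φ (Fin.snoc v b)

/-- Extension of an assignment of values to the literals in variables `x_1, …, x_i`
to the literals in variables `x_1, …, x_{i+1}`: a literal not containing the new
variable keeps its value under `ρ`, a literal containing the new variable gets its
value from `s`. -/
def extendA {i : ℕ} (ρ : Lit R ar (Fin i) → K) (s : Lit R ar (Fin (i+1)) → K) :
    Lit R ar (Fin (i+1)) → K := fun l =>
  if h : ∀ j, l.args j ≠ Fin.last i
  then ρ ⟨l.rel, fun j => (l.args j).castPred (h j), l.pos⟩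
  else s l

/-- Evaluation (in a lattice semiring `K`, with the distinguished element `ε` as
value of `e`) of the polynomial `f_ψ` over the three-element semiring
`E = ({0,e,1}, +, ·)` associated with a formula `ψ` with excluding quantifiers:
at an existential quantifier we take the supremum over all consistent selector
functions of new literals into `{0,1}`, at a universal quantifier the infimum over
all consistent selector functions into `{0,e}` (selector functions are presented by
maps `s` from the new atoms to `Bool`, telling which of the two complementary
literals is nonzero; the value `f_ψ[ρ]` only depends on their action on the new
literals). -/
noncomputable def fEval [DistribLattice K] [BoundedOrder K] [Fintype R] [DecidableEq R]
    (ε : K) : {i : ℕ} → FOx R ar i → (Lit R ar (Fin i) → K) → K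
  | _, .eq j l, _ => if j = l then ⊤ else ⊥
  | _, .ne j l, _ => if j = l then ⊥ else ⊤
  | _, .atom r as pos, ρ => ρ ⟨r, as, pos⟩
  | _, .or φ θ, ρ => fEval ε φ ρ ⊔ fEval ε θ ρ
  | _, .and φ θ, ρ => fEval ε φ ρ ⊓ fEval ε θ ρ
  | i, .exq φ, ρ => Finset.univ.sup fun s : Atoms R ar (Fin (i+1)) → Bool =>
      fEval ε φ (extendA ρ fun l => if s ⟨l.rel, l.args⟩ = l.pos then ⊤ else ⊥)
  | i, .allq φ, ρ => Finset.univ.inf fun s : Atoms R ar (Fin (i+1)) → Bool =>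
      fEval ε φ (extendA ρ fun l => if s ⟨l.rel, l.args⟩ = l.pos then ε else ⊥)
/-- The smallest positive element `ε_K = ⨅ {j ∈ K : j ≠ 0}` of a finite lattice semiring. -/
noncomputable def epsK (K : Type) [DistribLattice K] [BoundedOrder K] [Fintype K]
    [DecidableEq K] : K :=
  (Finset.univ.filter fun j : K => j ≠ ⊥).inf id

/-- A literal over the variables `x_1, …, x_{m+1}` containing the new variable `x_{m+1}`. -/
def NewLit {m : ℕ} (l : Lit R ar (Fin (m+1))) : Prop := ∃ j, l.args j = Fin.last m

/-- `ρp` is a maximal extension of `ρ`: all new literals get values in `{0,1} = {⊥,⊤}`. -/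
def MaxExt [Lattice K] [BoundedOrder K] {m : ℕ}
    (ρp : Lit R ar (Fin (m+1)) → K) (ρ : Lit R ar (Fin m) → K) : Prop :=
  Extends ρp ρ ∧ ∀ l : Lit R ar (Fin (m+1)), NewLit l → (ρp l = ⊥ ∨ ρp l = ⊤)

/-- `ρm` is a `δ`-small extension of `ρ`: all new literals get values `≤ δ`. -/
def SmallExt [Lattice K] [BoundedOrder K] {m : ℕ} (δ : K)
    (ρm : Lit R ar (Fin (m+1)) → K) (ρ : Lit R ar (Fin m) → K) : Prop :=
  Extends ρm ρ ∧ ∀ l : Lit R ar (Fin (m+1)), NewLit l → ρm l ≤ δ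

/-- The `(k,δ)`-extension property: every maximal extension of the type of a tuple is
realised, and also some `δ`-small extension below it is realised. -/
def ExtPropKD [Lattice K] [BoundedOrder K] (π : Lit R ar A → K) (k : ℕ) (δ : K) : Prop :=
  ∀ m, m < k → ∀ a : Fin m → A, Function.Injective a →
    ∀ ρp : Lit R ar (Fin (m+1)) → K, ModelDefining ⊥ ρp → MaxExt ρp (typeOf π a) →
      (∃ b : A, b ∉ Set.range a ∧ typeOf π (Fin.snoc a b) = ρp) ∧
      (∃ c : A, c ∉ Set.range a ∧ ModelDefining ⊥ (typeOf π (Fin.snoc a c)) ∧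
        typeOf π (Fin.snoc a c) ≤ ρp ∧ SmallExt δ (typeOf π (Fin.snoc a c)) (typeOf π a))

/-- `p` is weakly `ε`-bounded. -/
def WeaklyBounded [Lattice K] [BoundedOrder K] [MeasurableSpace K]
    (p : Measure K) (ε : K) : Prop :=
  0 < p {ε} ∧ ∀ δ : K, δ ≠ ⊥ → ¬ ε ≤ δ → p {x : K | ⊥ < x ∧ x ≤ δ} = 0

/-- `p` is strictly `ε`-bounded. -/
def StrictlyBounded [Lattice K] [BoundedOrder K] [MeasurableSpace K]
    (p : Measure K) (ε : K) : Prop :=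
  (∀ ε' : K, ¬ WeaklyBounded p ε') ∧ p {x : K | ⊥ < x ∧ x ≤ ε} = 0 ∧
    ∀ δ : K, ε < δ → 0 < p {x : K | ⊥ < x ∧ x ≤ δ}

/-- `p` is `ε`-bounded on small semiring values. -/
def EpsBounded [Lattice K] [BoundedOrder K] [MeasurableSpace K]
    (p : Measure K) (ε : K) : Prop :=
  WeaklyBounded p ε ∨ StrictlyBounded p ε

/-- `δ ∈ K⁺` is `p`-relevant (w.r.t. the parameter `ε` of the `ε`-bounded measure `p`). -/
def PRelevant [Lattice K] [BoundedOrder K] [MeasurableSpace K]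
    (p : Measure K) (ε δ : K) : Prop :=
  δ ≠ ⊥ ∧ (ε < δ ∨ (0 < p {ε} ∧ δ = ε))

/-- An interval of `K`: a closed, open, or half-open order interval. -/
def IsInterval [Lattice K] (J : Set K) : Prop :=
  ∃ a b : K, J = Set.Icc a b ∨ J = Set.Ico a b ∨ J = Set.Ioc a b ∨ J = Set.Ioo a b

section UnaryLatticePoly

variable [DistribLattice K]

-- The normal form `c ⊔ κ ⊓ d`, `c ≤ d`, of the unary lattice polynomials over `K`.
def IsUnaryLatticePoly (g : K → K) : Prop :=
  ∃ c d : K, c ≤ d ∧ g = fun κ => c ⊔ κ ⊓ d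

namespace IsUnaryLatticePoly

lemma const (c : K) : IsUnaryLatticePoly fun _ : K => c :=
  ⟨c, c, le_rfl, funext fun _ => (sup_eq_left.2 inf_le_right).symm⟩

lemma sup {g₁ g₂ : K → K} (h₁ : IsUnaryLatticePoly g₁) (h₂ : IsUnaryLatticePoly g₂) :
    IsUnaryLatticePoly fun κ => g₁ κ ⊔ g₂ κ := by
  obtain ⟨c₁, d₁, hcd₁, rfl⟩ := h₁
  obtain ⟨c₂, d₂, hcd₂, rfl⟩ := h₂
  refine ⟨c₁ ⊔ c₂, d₁ ⊔ d₂, sup_le_sup hcd₁ hcd₂, funext fun κ => ?_⟩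
  rw [inf_sup_left, sup_sup_sup_comm]

lemma inf {g₁ g₂ : K → K} (h₁ : IsUnaryLatticePoly g₁) (h₂ : IsUnaryLatticePoly g₂) :
    IsUnaryLatticePoly fun κ => g₁ κ ⊓ g₂ κ := by
  obtain ⟨c₁, d₁, hcd₁, rfl⟩ := h₁
  obtain ⟨c₂, d₂, hcd₂, rfl⟩ := h₂
  refine ⟨c₁ ⊓ c₂, d₁ ⊓ d₂, inf_le_inf hcd₁ hcd₂, funext fun κ => ?_⟩
  -- for `c ≤ d`, `c ⊔ κ ⊓ d = (c ⊔ κ) ⊓ d`, and in this form meets are computed coordinatewise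
  simp only [← sup_inf_assoc_of_le _ hcd₁, ← sup_inf_assoc_of_le _ hcd₂,
    ← sup_inf_assoc_of_le _ (inf_le_inf hcd₁ hcd₂), sup_inf_right]
  ac_rfl

variable [BoundedOrder K]

lemma id : IsUnaryLatticePoly fun κ : K => κ :=
  ⟨⊥, ⊤, bot_le, funext fun κ => by simp⟩

lemma finset_sup {ι : Type*} (s : Finset ι) {g : ι → K → K}
    (h : ∀ x ∈ s, IsUnaryLatticePoly (g x)) : IsUnaryLatticePoly fun κ => s.sup (g · κ) := by
  induction s using Finset.cons_induction with
  | empty => exact const ⊥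
  | cons x s hx ih =>
    simp only [Finset.sup_cons]
    exact (h x (s.mem_cons_self x)).sup (ih fun y hy => h y (Finset.mem_cons_of_mem hy))

lemma finset_inf {ι : Type*} (s : Finset ι) {g : ι → K → K}
    (h : ∀ x ∈ s, IsUnaryLatticePoly (g x)) : IsUnaryLatticePoly fun κ => s.inf (g · κ) := by
  induction s using Finset.cons_induction with
  | empty => exact const ⊤
  | cons x s hx ih =>
    simp only [Finset.inf_cons]
    exact (h x (s.mem_cons_self x)).inf (ih fun y hy => h y (Finset.mem_cons_of_mem hy))

lemma finset_inf_eq {g : K → K} (hg : IsUnaryLatticePoly g) {s : Finset K} (hs : s.Nonempty) :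
    s.inf g = g (s.inf _root_.id) := by
  obtain ⟨c, d, -, rfl⟩ := hg
  change s.inf (fun κ => c ⊔ (_root_.id ⊓ fun _ => d) κ) = _
  rw [← Finset.inf_sup_distrib_left, Finset.inf_inf, Finset.inf_const hs]

end IsUnaryLatticePoly

end UnaryLatticePoly

lemma FOx.le_width {i : ℕ} (φ : FOx R ar i) : i ≤ φ.width := by
  induction φ with
  | eq | ne | atom => exact le_rfl
  | or _ _ ih _ | and _ _ ih _ => exact ih.trans (le_max_left _ _)
  | exq _ ih | allq _ ih => exact (Nat.le_succ _).trans ih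

section Selectors

variable {X : Type}

-- The consistent selector function with values in `{0, κ}` used by `fEval`: `s` says which
-- literal of each new atom is nonzero.
def selector [Bot K] (s : Atoms R ar X → Bool) (κ : K) : Lit R ar X → K :=
  fun l => if s ⟨l.rel, l.args⟩ = l.pos then κ else ⊥

def selectorOf [Bot K] [DecidableEq K] (σ : Lit R ar X → K) : Atoms R ar X → Bool :=
  fun t => decide (σ ⟨t.1, t.2, true⟩ ≠ ⊥)

lemma selector_selectorOf [Bot K] [DecidableEq K] {σ : Lit R ar X → K}
    (hσ : ModelDefining ⊥ σ) (κ : K) (l : Lit R ar X) :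
    selector (selectorOf σ) κ l = if σ l = ⊥ then ⊥ else κ := by
  obtain ⟨r, as, _ | _⟩ := l
  · have := hσ r as
    by_cases h : σ ⟨r, as, false⟩ = ⊥ <;> simp_all [selector, selectorOf]
  · by_cases h : σ ⟨r, as, true⟩ = ⊥ <;> simp [selector, selectorOf, h]

lemma le_selector_selectorOf_top [Lattice K] [BoundedOrder K] [DecidableEq K]
    {σ : Lit R ar X → K} (hσ : ModelDefining ⊥ σ) : σ ≤ selector (selectorOf σ) ⊤ := by
  intro l
  rw [selector_selectorOf hσ]
  split_ifs with h
  exacts [h.le, le_top]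

lemma selector_selectorOf_le [Lattice K] [BoundedOrder K] [DecidableEq K]
    {σ : Lit R ar X → K} (hσ : ModelDefining ⊥ σ) {κ : K} (hκ : ∀ l, σ l ≠ ⊥ → κ ≤ σ l) :
    selector (selectorOf σ) κ ≤ σ := by
  intro l
  rw [selector_selectorOf hσ]
  split_ifs with h
  exacts [bot_le, hκ l h]

end Selectors

section ExtendA

variable {i : ℕ}

lemma extendA_mono [Preorder K] {ρ₁ ρ₂ : Lit R ar (Fin i) → K} {s₁ s₂ : Lit R ar (Fin (i+1)) → K}
    (hρ : ρ₁ ≤ ρ₂) (hs : s₁ ≤ s₂) : extendA ρ₁ s₁ ≤ extendA ρ₂ s₂ := by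
  intro l
  unfold extendA
  split
  exacts [hρ _, hs _]

lemma extendA_extends (ρ : Lit R ar (Fin i) → K) (s : Lit R ar (Fin (i+1)) → K) :
    Extends (extendA ρ s) ρ := by
  intro l
  have h : ∀ j, (l.map Fin.castSucc).args j ≠ Fin.last i := fun j => (Fin.castSucc_lt_last _).ne
  rw [extendA, dif_pos h]
  rfl

lemma extendA_typeOf_snoc (π : Lit R ar A → K) (a : Fin i → A) (b : A) :
    extendA (typeOf π a) (typeOf π (Fin.snoc a b)) = typeOf π (Fin.snoc a b) := by
  funext l
  unfold extendA
  split_ifs with h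
  · simp only [typeOf, Lit.map]
    congr
    funext j
    conv_rhs => rw [← Fin.castSucc_castPred (l.args j) (h j), Fin.snoc_castSucc]
  · rfl

lemma ModelDefining.typeOf [Bot K] {π : Lit R ar A → K} (hπ : ModelDefining ⊥ π)
    {m : ℕ} (a : Fin m → A) : ModelDefining ⊥ (typeOf π a) :=
  fun r as => hπ r (a ∘ as)

lemma ModelDefining.extendA_selector [Bot K] {ρ : Lit R ar (Fin i) → K} (hρ : ModelDefining ⊥ ρ)
    (s : Atoms R ar (Fin (i+1)) → Bool) {κ : K} (hκ : κ ≠ ⊥) :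
    ModelDefining ⊥ (extendA ρ (selector s κ)) := by
  intro r as
  by_cases h : ∀ j, as j ≠ Fin.last i
  · simp only [extendA, dif_pos h]
    exact hρ _ _
  · simp only [extendA, dif_neg h, selector]
    cases s ⟨r, as⟩ <;> simp [hκ]

end ExtendA

section FEval

variable [DistribLattice K] [BoundedOrder K] [Fintype R] [DecidableEq R] (ε : K)

lemma fEval_exq {i : ℕ} (φ : FOx R ar (i+1)) (ρ : Lit R ar (Fin i) → K) :
    fEval ε (.exq φ) ρ = Finset.univ.sup fun s => fEval ε φ (extendA ρ (selector s ⊤)) :=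
  rfl

lemma fEval_allq {i : ℕ} (φ : FOx R ar (i+1)) (ρ : Lit R ar (Fin i) → K) :
    fEval ε (.allq φ) ρ = Finset.univ.inf fun s => fEval ε φ (extendA ρ (selector s ε)) :=
  rfl

lemma fEval_mono {i : ℕ} (φ : FOx R ar i) : Monotone (fEval ε φ) := by
  induction φ with
  | eq | ne => exact fun _ _ _ => le_rfl
  | atom => exact fun _ _ h => h _
  | or _ _ ih₁ ih₂ => exact fun _ _ h => sup_le_sup (ih₁ h) (ih₂ h)
  | and _ _ ih₁ ih₂ => exact fun _ _ h => inf_le_inf (ih₁ h) (ih₂ h)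
  | exq _ ih => exact fun _ _ h => Finset.sup_mono_fun fun _ _ => ih (extendA_mono h le_rfl)
  | allq _ ih => exact fun _ _ h => Finset.inf_mono_fun fun _ _ => ih (extendA_mono h le_rfl)

lemma IsUnaryLatticePoly.fEval {i : ℕ} (φ : FOx R ar i) {ρ : K → Lit R ar (Fin i) → K}
    (hρ : ∀ l, IsUnaryLatticePoly fun κ => ρ κ l) :
    IsUnaryLatticePoly fun κ => fEval ε φ (ρ κ) := by
  induction φ with
  | eq | ne => exact const _
  | atom => exact hρ _
  | or _ _ ih₁ ih₂ => exact (ih₁ hρ).sup (ih₂ hρ)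
  | and _ _ ih₁ ih₂ => exact (ih₁ hρ).inf (ih₂ hρ)
  | exq _ ih =>
    refine finset_sup _ fun s _ => ih fun l => ?_
    unfold extendA
    split
    exacts [hρ _, const _]
  | allq _ ih =>
    refine finset_inf _ fun s _ => ih fun l => ?_
    unfold extendA
    split
    exacts [hρ _, const _]

end FEval

lemma epsK_le [DistribLattice K] [BoundedOrder K] [Fintype K] [DecidableEq K] {κ : K}
    (hκ : κ ≠ ⊥) : epsK K ≤ κ :=
  Finset.inf_le (f := id) (by simpa using hκ)

lemma mem_filter_fresh [Fintype A] [DecidableEq A] {m : ℕ} {a : Fin m → A} {b : A} :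
    b ∈ Finset.univ.filter (fun b => ∀ j, a j ≠ b) ↔ b ∉ Set.range a := by
  simp

lemma ExtProp.exists_typeOf_snoc_eq [Bot K] {π : Lit R ar A → K} {i k : ℕ}
    (hext : ExtProp ⊥ π k) (hπ : ModelDefining ⊥ π) (hik : i < k)
    {a : Fin i → A} (ha : Function.Injective a) (s : Atoms R ar (Fin (i+1)) → Bool)
    {κ : K} (hκ : κ ≠ ⊥) :
    ∃ b ∉ Set.range a, typeOf π (Fin.snoc a b) = extendA (typeOf π a) (selector s κ) := by
  obtain ⟨b, hb, -, hσ⟩ := hext i hik _ (hπ.typeOf a) _ ((hπ.typeOf a).extendA_selector s hκ)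
    (extendA_extends _ _) a ⟨ha, rfl⟩
  exact ⟨b, hb, hσ⟩

section Quantifiers

variable [DistribLattice K] [BoundedOrder K] [DecidableEq K] {π : Lit R ar A → K} {i : ℕ}

lemma typeOf_snoc_le_extendA_selector_top (hπ : ModelDefining ⊥ π) (a : Fin i → A) (b : A) :
    typeOf π (Fin.snoc a b) ≤
      extendA (typeOf π a) (selector (selectorOf (typeOf π (Fin.snoc a b))) ⊤) := by
  conv_lhs => rw [← extendA_typeOf_snoc]
  exact extendA_mono le_rfl (le_selector_selectorOf_top (hπ.typeOf _))

lemma extendA_selector_epsK_le_typeOf_snoc [Fintype K] (hπ : ModelDefining ⊥ π)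
    (a : Fin i → A) (b : A) :
    extendA (typeOf π a) (selector (selectorOf (typeOf π (Fin.snoc a b))) (epsK K)) ≤
      typeOf π (Fin.snoc a b) := by
  conv_rhs => rw [← extendA_typeOf_snoc]
  exact extendA_mono le_rfl (selector_selectorOf_le (hπ.typeOf _) fun _ => epsK_le)

variable [Nontrivial K] [Fintype R] [DecidableEq R] [Fintype A] [DecidableEq A]
  {k : ℕ} (hπ : ModelDefining ⊥ π) (hext : ExtProp ⊥ π k) (hik : i < k)
  {a : Fin i → A} (ha : Function.Injective a) {φ : FOx R ar (i+1)}
include hπ hext hik ha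

lemma evalLx_exq_eq_fEval (ε : K)
    (ih : ∀ b ∉ Set.range a, evalLx π φ (Fin.snoc a b) = fEval ε φ (typeOf π (Fin.snoc a b))) :
    evalLx π (.exq φ) a = fEval ε (.exq φ) (typeOf π a) := by
  rw [fEval_exq]
  apply le_antisymm
  · refine Finset.sup_le fun b hb => ?_
    rw [ih b (mem_filter_fresh.1 hb)]
    exact (fEval_mono ε φ (typeOf_snoc_le_extendA_selector_top hπ a b)).trans
      (Finset.le_sup (f := fun s => fEval ε φ (extendA (typeOf π a) (selector s ⊤)))
        (Finset.mem_univ _))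
  · refine Finset.sup_le fun s _ => ?_
    obtain ⟨b, hb, hσ⟩ := hext.exists_typeOf_snoc_eq hπ hik ha s top_ne_bot
    rw [← hσ, ← ih b hb]
    exact Finset.le_sup (f := fun b => evalLx π φ (Fin.snoc a b)) (mem_filter_fresh.2 hb)

lemma evalLx_allq_eq_fEval [Fintype K]
    (ih : ∀ b ∉ Set.range a,
      evalLx π φ (Fin.snoc a b) = fEval (epsK K) φ (typeOf π (Fin.snoc a b))) :
    evalLx π (.allq φ) a = fEval (epsK K) (.allq φ) (typeOf π a) := by
  rw [fEval_allq]
  apply le_antisymm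
  · refine Finset.le_inf fun s _ => ?_
    have hpoly : IsUnaryLatticePoly fun κ =>
        fEval (epsK K) φ (extendA (typeOf π a) (selector s κ)) := by
      refine IsUnaryLatticePoly.fEval _ φ fun l => ?_
      unfold extendA selector
      split_ifs
      exacts [.const _, .id, .const _]
    refine le_trans ?_ (hpoly.finset_inf_eq ⟨⊤, by simp⟩).le
    refine Finset.le_inf fun κ hκ => ?_
    obtain ⟨b, hb, hσ⟩ := hext.exists_typeOf_snoc_eq hπ hik ha s (Finset.mem_filter.1 hκ).2
    rw [← hσ, ← ih b hb]
    exact Finset.inf_le (f := fun b => evalLx π φ (Fin.snoc a b)) (mem_filter_fresh.2 hb)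
  · refine Finset.le_inf fun b hb => ?_
    rw [ih b (mem_filter_fresh.1 hb)]
    exact (Finset.inf_le (Finset.mem_univ _)).trans
      (fEval_mono _ φ (extendA_selector_epsK_le_typeOf_snoc hπ a b))

end Quantifiers

/-- Let `K` be a finite lattice semiring (a finite bounded
distributive lattice, with `0 = ⊥`, `1 = ⊤`, addition `⊔`, multiplication `⊓`).
For every `K`-interpretation `π` with the `k`-extension property, every formula
`ψ(x_1,…,x_i) ∈ FO^k` (in NNF, with excluding quantifiers, using at most `k`
variables) and every tuple `ā` of pairwise distinct elements,
`π⟦ψ(ā)⟧ = f_ψ[ρ^π_ā]`, where the polynomial `f_ψ` is evaluated with `e ↦ ε_K`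
and `X_β ↦ ρ^π_ā(β)`. -/
theorem statement_1
    {R : Type} [Fintype R] [DecidableEq R] {ar : R → ℕ}
    {K : Type} [DistribLattice K] [BoundedOrder K] [Fintype K] [DecidableEq K]
    {A : Type} [Fintype A] [DecidableEq A]
    (k : ℕ) (π : Lit R ar A → K) (hmd : ModelDefining (⊥ : K) π)
    (hext : ExtProp (⊥ : K) π k)
    {i : ℕ} (ψ : FOx R ar i) (hw : ψ.width ≤ k)
    (a : Fin i → A) (ha : Function.Injective a) :
    evalLx π ψ a = fEval (epsK K) ψ (typeOf π a) := by
  rcases subsingleton_or_nontrivial K with hK | hK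
  · exact Subsingleton.elim _ _
  induction ψ with
  | eq j l | ne j l => simp only [evalLx, fEval, ha.eq_iff]
  | atom => rfl
  | or φ θ ih₁ ih₂ | and φ θ ih₁ ih₂ =>
    rw [FOx.width, max_le_iff] at hw
    simp only [evalLx, fEval, ih₁ hw.1 a ha, ih₂ hw.2 a ha]
  | exq φ ih =>
    exact evalLx_exq_eq_fEval hmd hext ((Nat.lt_succ_self _).trans_le (φ.le_width.trans hw)) ha _
      fun b hb => ih hw _ (Fin.snoc_injective_of_injective ha hb)
  | allq φ ih =>
    exact evalLx_allq_eq_fEval hmd hext ((Nat.lt_succ_self _).trans_le (φ.le_width.trans hw)) ha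
      fun b hb => ih hw _ (Fin.snoc_injective_of_injective ha hb)
end

section
/- Let K be an infinite lattice semiring with an ε-bounded probability measure p on K⁺. Then for every fixed k, every finite relational vocabulary τ, and every p-relevant δ, the probability under μ_{n,p} that a random K-interpretation on [n] has the (k,δ)-extension property converges to 1 as n → ∞, and the convergence is exponentially fast. -/
/-! For a tuple `ā` and a prescribed extension of its type, whether a fresh element `b` realises
the extension depends only on the atoms that mention `b`; these sets of atoms are disjoint for
distinct `b`, so the events are independent. Each of them has probability at least `α ^ M`, where
`M` bounds the number of new atoms and `α > 0` bounds from below the probability that a single atom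
gets the prescribed sign with the prescribed value: `1` for maximal extensions, a value in `(0, δ]`
for `δ`-small ones (this interval has positive `p`-measure because `p` is `ε`-bounded and `δ` is
`p`-relevant). So a fixed requirement fails with probability at most `(1 - α ^ M) ^ (n - k)`, and a
union bound over the `O(n ^ k)` requirements (a tuple, a sign for each new atom, and the kind of
extension) gives an exponentially small failure probability. -/

open MeasureTheory Filter Set
open scoped ENNReal BigOperators

variable {R : Type} {ar : R → ℕ} {A B K : Type}

open scoped NNReal

section ProductMeasure

variable {I J T X : Type} [Fintype I] [Fintype J] [Fintype T] [MeasurableSpace X]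
  (ν : Measure X) [IsProbabilityMeasure ν]

theorem map_pi_regroup {g : J × T → I} (hg : g.Injective) :
    (Measure.pi fun _ : I => ν).map (fun ω j t => ω (g (j, t))) =
      Measure.pi fun _ : J => Measure.pi fun _ : T => ν := by
  classical
  have hmeas : Measurable fun (ω : I → X) (j : J) (t : T) => ω (g (j, t)) := by fun_prop
  refine (Measure.pi_eq_generateFrom (fun _ => generateFrom_pi) (fun _ => isPiSystem_pi)
    (fun _ => Measure.FiniteSpanningSetsIn.pi fun _ => ν.toFiniteSpanningSetsIn) ?_).symm
  intro s hs
  choose f hf hfs using hs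
  obtain rfl : s = fun j => univ.pi (f j) := funext fun j => (hfs j).symm
  have hf' : ∀ j t, MeasurableSet (f j t) := fun j t => hf j t (mem_univ t)
  have hpre : (fun (ω : I → X) (j : J) (t : T) => ω (g (j, t))) ⁻¹' univ.pi (fun j => univ.pi (f j))
      = univ.pi (Function.extend g (fun jt => f jt.1 jt.2) fun _ => univ) := by
    ext ω
    simp only [mem_preimage, mem_univ_pi]
    refine ⟨fun h i => ?_, fun h j t => by simpa [hg.extend_apply] using h (g (j, t))⟩
    by_cases hi : ∃ jt, g jt = i
    · obtain ⟨⟨j, t⟩, rfl⟩ := hi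
      simpa [hg.extend_apply] using h j t
    · simp [Function.extend_apply' _ _ _ hi]
  rw [Measure.map_apply hmeas (.univ_pi fun j => .univ_pi (hf' j)), hpre, Measure.pi_pi]
  simp_rw [Measure.pi_pi]
  rw [← Fintype.prod_prod_type']
  refine (Fintype.prod_of_injective g hg _ _ (fun i hi => ?_) fun jt => ?_).symm
  · rw [Function.extend_apply' _ _ _ fun ⟨jt, hjt⟩ => hi ⟨jt, hjt⟩, measure_univ]
  · simp [hg.extend_apply]

theorem measure_pi_forall_exists_not_mem {g : J × T → I} (hg : g.Injective)
    {S : T → Set X} (hS : ∀ t, MeasurableSet (S t)) :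
    Measure.pi (fun _ : I => ν) {ω | ∀ j, ∃ t, ω (g (j, t)) ∉ S t} =
      (1 - ∏ t, ν (S t)) ^ Fintype.card J := by
  have hmeas : Measurable fun (ω : I → X) (j : J) (t : T) => ω (g (j, t)) := by fun_prop
  have hset : {ω : I → X | ∀ j, ∃ t, ω (g (j, t)) ∉ S t} =
      (fun ω j t => ω (g (j, t))) ⁻¹' univ.pi fun _ : J => (univ.pi S)ᶜ := by
    ext ω
    simp
  rw [hset, ← Measure.map_apply hmeas (.univ_pi fun _ => (MeasurableSet.univ_pi hS).compl),
    map_pi_regroup ν hg, Measure.pi_pi, prob_compl_eq_one_sub (.univ_pi hS), Measure.pi_pi,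
    Finset.prod_const, Finset.card_univ]

end ProductMeasure

theorem NNReal.exists_add_one_pow_mul_pow_le {x : ℝ≥0} (hx0 : 0 < x) (hx1 : x < 1) (k : ℕ) :
    ∃ B : ℝ≥0, ∀ n : ℕ, ((n : ℝ≥0) + 1) ^ k * x ^ n ≤ B := by
  obtain ⟨B, hB⟩ := ((tendsto_pow_const_mul_const_pow_of_lt_one k x.coe_nonneg hx1).comp
    (tendsto_add_atTop_nat 1)).bddAbove_range
  refine ⟨B.toNNReal / x, fun n => ?_⟩
  rw [le_div_iff₀ hx0, ← NNReal.coe_le_coe, mul_assoc, ← pow_succ]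
  push_cast
  exact_mod_cast (hB ⟨n, rfl⟩).trans (Real.le_coe_toNNReal B)

theorem ENNReal.exists_add_one_pow_mul_pow_sub_le {r : ℝ≥0∞} (hr : r < 1) (k : ℕ) :
    ∃ C q : ℝ≥0∞, C ≠ ⊤ ∧ q < 1 ∧ ∀ n : ℕ, ((n : ℝ≥0∞) + 1) ^ k * r ^ (n - k) ≤ C * q ^ n := by
  -- pass to some `s ∈ (0, 1)` above `r`: `s > 0` gives `s ^ (n - k) ≤ s ^ n / s ^ k`
  set s : ℝ≥0 := max r.toNNReal 2⁻¹
  have hrs : r ≤ s :=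
    (ENNReal.coe_toNNReal hr.ne_top).symm.le.trans (by gcongr; exact le_max_left _ _)
  have hs0 : 0 < s := lt_max_of_lt_right (by norm_num)
  have hs1 : s < 1 := max_lt (ENNReal.toNNReal_lt_of_lt_coe hr) (by norm_num)
  obtain ⟨q, hsq, hq1⟩ := exists_between hs1
  have hq0 : 0 < q := hs0.trans hsq
  obtain ⟨B, hB⟩ := NNReal.exists_add_one_pow_mul_pow_le (div_pos hs0 hq0)
    ((div_lt_one hq0).2 hsq) k
  refine ⟨(B / s ^ k : ℝ≥0), q, ENNReal.coe_ne_top, ENNReal.coe_lt_one_iff.2 hq1, fun n => ?_⟩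
  have hshift : s ^ (n - k) ≤ s ^ n / s ^ k := by
    rw [le_div_iff₀ (pow_pos hs0 k), ← pow_add]
    exact pow_le_pow_right_of_le_one' hs1.le (by omega)
  have key : ((n : ℝ≥0) + 1) ^ k * s ^ (n - k) ≤ B / s ^ k * q ^ n := calc
    ((n : ℝ≥0) + 1) ^ k * s ^ (n - k) ≤ ((n : ℝ≥0) + 1) ^ k * (s ^ n / s ^ k) := by gcongr
    _ = ((n : ℝ≥0) + 1) ^ k * (s / q) ^ n / s ^ k * q ^ n := by
      rw [div_pow]; field_simp
    _ ≤ B / s ^ k * q ^ n := by gcongr; exact hB n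
  calc ((n : ℝ≥0∞) + 1) ^ k * r ^ (n - k) ≤ (((n : ℝ≥0) + 1) ^ k * s ^ (n - k) : ℝ≥0) := by
        push_cast; gcongr
    _ ≤ ((B / s ^ k * q ^ n : ℝ≥0) : ℝ≥0∞) := ENNReal.coe_le_coe.2 key
    _ = _ := by push_cast; rfl

theorem expConv_one_of_measure_compl_le {Ω : ℕ → Type} [∀ n, MeasurableSpace (Ω n)]
    (μ : ∀ n, Measure (Ω n)) [∀ n, IsProbabilityMeasure (μ n)] (E : ∀ n, Set (Ω n))
    {C q : ℝ≥0∞} (hC : C ≠ ⊤) (hq : q < 1) (hE : ∀ n, μ n (E n)ᶜ ≤ C * q ^ n) :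
    ExpConv (fun n => μ n (E n)) 1 :=
  ⟨C, q, hC, hq, fun n => ⟨prob_le_one.trans le_self_add, calc
    1 = μ n univ := measure_univ.symm
    _ ≤ μ n (E n) + μ n (E n)ᶜ := measure_univ_le_add_compl _
    _ ≤ μ n (E n) + C * q ^ n := by gcongr; exact hE n⟩⟩

section SignedPair

variable [PartialOrder K] [BoundedOrder K]

/-- The values `(x⁺, x⁻)` of an atom and its negation in which the literal of polarity `s` takes
a value in `V` and the other one is `0`. -/
def signedPair (s : Bool) (V : Set K) : Set (K × K) :=
  if s then V ×ˢ {⊥} else {⊥} ×ˢ V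

theorem mem_signedPair_iff {s : Bool} {V : Set K} {x : K × K} :
    x ∈ signedPair s V ↔ if s then x.1 ∈ V ∧ x.2 = ⊥ else x.1 = ⊥ ∧ x.2 ∈ V := by
  cases s <;> simp [signedPair]

theorem exists_mem_signedPair_top {x : K × K} (h₁ : x.1 = ⊥ ∨ x.1 = ⊤) (h₂ : x.2 = ⊥ ∨ x.2 = ⊤)
    (hx : x.1 = ⊥ ↔ x.2 ≠ ⊥) : ∃ s, x ∈ signedPair s {⊤} := by
  by_cases h : x.1 = ⊥
  · exact ⟨false, mem_signedPair_iff.2 ⟨h, h₂.resolve_left (hx.1 h)⟩⟩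
  · exact ⟨true, mem_signedPair_iff.2 ⟨h₁.resolve_left h, not_not.1 (mt hx.2 h)⟩⟩

theorem signedPair_top_subsingleton (s : Bool) : (signedPair s ({⊤} : Set K)).Subsingleton := by
  cases s <;> simp [signedPair]

theorem le_of_mem_signedPair {s : Bool} {V : Set K} {x y : K × K} (hx : x ∈ signedPair s V)
    (hy : y ∈ signedPair s {⊤}) : x ≤ y := by
  cases s <;> simp_all [mem_signedPair_iff, Prod.le_def]

theorem fst_eq_bot_iff_of_mem_signedPair {s : Bool} {V : Set K} (hV : ⊥ ∉ V) {x : K × K}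
    (hx : x ∈ signedPair s V) : x.1 = ⊥ ↔ x.2 ≠ ⊥ := by
  cases s <;> rw [mem_signedPair_iff] at hx <;> simp only [Bool.false_eq_true, if_false,
    if_true] at hx
  · exact iff_of_true hx.1 fun h => hV (h ▸ hx.2)
  · exact iff_of_false (fun h => hV (h ▸ hx.1)) (not_not.2 hx.2)

theorem le_of_mem_signedPair_Iic {s : Bool} {V : Set K} {δ : K} (hV : V ⊆ Iic δ) {x : K × K}
    (hx : x ∈ signedPair s V) : x ≤ (δ, δ) := by
  cases s <;> rw [mem_signedPair_iff] at hx <;> simp only [Bool.false_eq_true, if_false,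
    if_true] at hx
  · exact ⟨hx.1 ▸ bot_le, hV hx.2⟩
  · exact ⟨hV hx.1, hx.2 ▸ bot_le⟩

end SignedPair

def atomPair (ρ : Lit R ar A → K) (t : Atoms R ar A) : K × K :=
  (ρ ⟨t.1, t.2, true⟩, ρ ⟨t.1, t.2, false⟩)

theorem apply_le_apply_of_atomPair_le [Preorder K] {ρ₁ ρ₂ : Lit R ar A → K} {l : Lit R ar A}
    (h : atomPair ρ₁ ⟨l.rel, l.args⟩ ≤ atomPair ρ₂ ⟨l.rel, l.args⟩) : ρ₁ l ≤ ρ₂ l := by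
  obtain ⟨r, as, _ | _⟩ := l
  exacts [h.2, h.1]

theorem apply_eq_apply_of_atomPair_eq {ρ₁ ρ₂ : Lit R ar A → K} {l : Lit R ar A}
    (h : atomPair ρ₁ ⟨l.rel, l.args⟩ = atomPair ρ₂ ⟨l.rel, l.args⟩) : ρ₁ l = ρ₂ l := by
  obtain ⟨r, as, _ | _⟩ := l
  exacts [congrArg Prod.snd h, congrArg Prod.fst h]

theorem Extends.eq_of_not_newLit {m : ℕ} {ρ₁ ρ₂ : Lit R ar (Fin (m + 1)) → K}
    {ρ : Lit R ar (Fin m) → K} (h₁ : Extends ρ₁ ρ) (h₂ : Extends ρ₂ ρ)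
    {l : Lit R ar (Fin (m + 1))} (hl : ¬NewLit l) : ρ₁ l = ρ₂ l := by
  simp only [NewLit, not_exists] at hl
  have hmap : Lit.map Fin.castSucc ⟨l.rel, fun j => (l.args j).castPred (hl j), l.pos⟩ = l := by
    simp [Lit.map]
  rw [← hmap, h₁, h₂]

theorem extends_typeOf_snoc {m : ℕ} (π : Lit R ar A → K) (a : Fin m → A) (b : A) :
    Extends (typeOf π (Fin.snoc a b)) (typeOf π a) := by
  intro l
  simp [typeOf, Lit.map]

def NewAtom (R : Type) (ar : R → ℕ) (m : ℕ) : Type :=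
  {t : Atoms R ar (Fin (m + 1)) // ∃ j, t.2 j = Fin.last m}

instance [Fintype R] {m : ℕ} : Fintype (NewAtom R ar m) := by
  unfold NewAtom; infer_instance

instance [DecidableEq R] {m : ℕ} : DecidableEq (NewAtom R ar m) := by
  unfold NewAtom; infer_instance

def NewAtom.inst {m : ℕ} (t : NewAtom R ar m) (a : Fin m → A) (b : A) : Atoms R ar A :=
  ⟨t.1.1, Fin.snoc a b ∘ t.1.2⟩

def NewLit.toNewAtom {m : ℕ} {l : Lit R ar (Fin (m + 1))} (hl : NewLit l) : NewAtom R ar m :=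
  ⟨⟨l.rel, l.args⟩, hl⟩

theorem NewAtom.inst_injective {m : ℕ} {a : Fin m → A} (ha : a.Injective) :
    (fun bt : {b // b ∉ range a} × NewAtom R ar m => bt.2.inst a bt.1).Injective := by
  rintro ⟨⟨b, hb⟩, ⟨⟨r, f⟩, j, hj⟩⟩ ⟨⟨b', hb'⟩, ⟨⟨r', f'⟩, j', hj'⟩⟩ h
  obtain ⟨rfl, h⟩ := Sigma.mk.inj_iff.1 h
  dsimp only at h
  have hf := congrFun (eq_of_heq h)
  simp only [Function.comp_apply] at hf
  obtain rfl : b = b' := by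
    have := hf j
    rw [show f j = Fin.last m from hj, Fin.snoc_last] at this
    rcases Fin.eq_castSucc_or_eq_last (f' j) with ⟨i, hi⟩ | hi
    · rw [hi, Fin.snoc_castSucc] at this
      exact absurd ⟨i, this.symm⟩ hb
    · rwa [hi, Fin.snoc_last] at this
  obtain rfl : f = f' := funext fun i => Fin.snoc_injective_of_injective ha hb (hf i)
  rfl

section Witnesses

variable [Lattice K] [BoundedOrder K] {m : ℕ} {ρp : Lit R ar (Fin (m + 1)) → K}
  {π : Lit R ar A → K} {a : Fin m → A} {s : NewAtom R ar m → Bool}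

theorem MaxExt.exists_mem_signedPair_top {ρ : Lit R ar (Fin m) → K} (hmd : ModelDefining ⊥ ρp)
    (hmax : MaxExt ρp ρ) (t : NewAtom R ar m) : ∃ s, atomPair ρp t.1 ∈ signedPair s {⊤} :=
  _root_.exists_mem_signedPair_top (hmax.2 ⟨t.1.1, t.1.2, true⟩ t.2)
    (hmax.2 ⟨t.1.1, t.1.2, false⟩ t.2) (hmd t.1.1 t.1.2)

theorem typeOf_snoc_eq_of_forall_mem {b : A} (hmax : MaxExt ρp (typeOf π a))
    (hs : ∀ t, atomPair ρp t.1 ∈ signedPair (s t) {⊤})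
    (hb : ∀ t, atomPair π (t.inst a b) ∈ signedPair (s t) {⊤}) :
    typeOf π (Fin.snoc a b) = ρp := by
  funext l
  by_cases hl : NewLit l
  · exact apply_eq_apply_of_atomPair_eq
      (signedPair_top_subsingleton _ (hb (NewLit.toNewAtom hl)) (hs _))
  · exact (extends_typeOf_snoc π a b).eq_of_not_newLit hmax.1 hl

theorem smallExt_of_forall_mem {c : A} {δ : K} {V : Set K} (hV : ⊥ ∉ V) (hVδ : V ⊆ Iic δ)
    (hmd : ModelDefining ⊥ ρp) (hmax : MaxExt ρp (typeOf π a))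
    (hs : ∀ t, atomPair ρp t.1 ∈ signedPair (s t) {⊤})
    (hc : ∀ t, atomPair π (t.inst a c) ∈ signedPair (s t) V) :
    ModelDefining ⊥ (typeOf π (Fin.snoc a c)) ∧ typeOf π (Fin.snoc a c) ≤ ρp ∧
      SmallExt δ (typeOf π (Fin.snoc a c)) (typeOf π a) := by
  have hold {l} (hl : ¬NewLit l) := (extends_typeOf_snoc π a c).eq_of_not_newLit hmax.1 hl
  refine ⟨fun r as => ?_, fun l => ?_, extends_typeOf_snoc π a c, fun l hl => ?_⟩
  · by_cases hl : ∃ j, as j = Fin.last m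
    · exact fst_eq_bot_iff_of_mem_signedPair hV (hc ⟨⟨r, as⟩, hl⟩)
    · rw [hold (l := ⟨r, as, true⟩) hl, hold (l := ⟨r, as, false⟩) hl]
      exact hmd r as
  · by_cases hl : NewLit l
    · exact apply_le_apply_of_atomPair_le
        (le_of_mem_signedPair (hc (NewLit.toNewAtom hl)) (hs _))
    · exact (hold hl).le
  · exact apply_le_apply_of_atomPair_le (ρ₂ := fun _ => δ)
      (le_of_mem_signedPair_Iic hVδ (hc (NewLit.toNewAtom hl)))

end Witnesses

def noWitness {m : ℕ} (a : Fin m → A) (S : NewAtom R ar m → Set (K × K)) :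
    Set (Atoms R ar A → K × K) :=
  {ω | ∀ b : {b // b ∉ range a}, ∃ t, ω (t.inst a b) ∉ S t}

/-- Values of the true literal at a new atom: `1` for maximal, `(0, δ]` for `δ`-small extensions. -/
def extTarget [Lattice K] [BoundedOrder K] (δ : K) (isMax : Bool) : Set K :=
  cond isMax {⊤} (Ioc ⊥ δ)

theorem setOf_not_extPropKD_subset [Lattice K] [BoundedOrder K] (k : ℕ) (δ : K) :
    {ω : Atoms R ar A → K × K | ¬ExtPropKD (interpOf ω) k δ} ⊆
      ⋃ i : Σ m : Fin k, {a : Fin m → A // a.Injective} × (NewAtom R ar m → Bool) × Bool,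
        noWitness i.2.1.1 fun t => signedPair (i.2.2.1 t) (extTarget δ i.2.2.2) := by
  intro ω hω
  simp only [mem_ofPred_eq, ExtPropKD, not_forall, not_and_or] at hω
  obtain ⟨m, hm, a, ha, ρp, hmd, hmax, hfail⟩ := hω
  choose s hs using hmax.exists_mem_signedPair_top hmd
  rcases hfail with hmaxFail | hsmallFail
  · refine mem_iUnion.2 ⟨⟨⟨m, hm⟩, ⟨a, ha⟩, s, true⟩, fun b => ?_⟩
    by_contra! hb
    exact hmaxFail ⟨b, b.2, typeOf_snoc_eq_of_forall_mem hmax hs hb⟩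
  · refine mem_iUnion.2 ⟨⟨⟨m, hm⟩, ⟨a, ha⟩, s, false⟩, fun c => ?_⟩
    by_contra! hc
    exact hsmallFail ⟨c, c.2, smallExt_of_forall_mem (fun h => lt_irrefl _ h.1)
      Ioc_subset_Iic_self hmd hmax hs hc⟩

section RandomInterpretations

variable [MeasurableSpace K] (p : Measure K)

instance [IsProbabilityMeasure p] (z : K) : IsProbabilityMeasure (atomMeasure z p) := by
  constructor
  rw [atomMeasure, Measure.smul_apply, Measure.add_apply,
    Measure.map_apply measurable_prodMk_right .univ, Measure.map_apply measurable_prodMk_left .univ]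
  simp [← two_mul, ENNReal.inv_mul_cancel]

instance [IsProbabilityMeasure p] [Fintype R] (z : K) (n : ℕ) :
    IsProbabilityMeasure (muI (ar := ar) z p n) := by
  unfold muI; infer_instance

theorem MeasurableSet.signedPair [PartialOrder K] [BoundedOrder K]
    (hbot : MeasurableSet {(⊥ : K)}) (s : Bool) {V : Set K} (hV : MeasurableSet V) :
    MeasurableSet (signedPair s V) := by
  cases s
  exacts [hbot.prod hV, hV.prod hbot]

theorem atomMeasure_signedPair [PartialOrder K] [BoundedOrder K] (hbot : MeasurableSet {(⊥ : K)})
    (s : Bool) {V : Set K} (hV : MeasurableSet V) (hV₀ : ⊥ ∉ V) :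
    atomMeasure ⊥ p (signedPair s V) = 2⁻¹ * p V := by
  have hmeas := hbot.signedPair s hV
  rw [atomMeasure, Measure.smul_apply, Measure.add_apply,
    Measure.map_apply measurable_prodMk_right hmeas, Measure.map_apply measurable_prodMk_left hmeas]
  cases s <;> simp [signedPair, hV₀]

theorem muI_noWitness [IsProbabilityMeasure p] [Fintype R] (z : K) {n m : ℕ}
    {a : Fin m → Fin n} (ha : a.Injective) {S : NewAtom R ar m → Set (K × K)}
    (hS : ∀ t, MeasurableSet (S t)) :
    muI z p n (noWitness a S) =
      (1 - ∏ t, atomMeasure z p (S t)) ^ Fintype.card {b // b ∉ range a} :=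
  measure_pi_forall_exists_not_mem _ (NewAtom.inst_injective ha) hS

theorem le_card_compl_range {m n : ℕ} (a : Fin m → Fin n) :
    n - m ≤ Fintype.card {b // b ∉ range a} := by
  classical
  rw [Fintype.card_subtype_compl, Fintype.card_fin]
  exact Nat.sub_le_sub_left ((Fintype.card_range_le a).trans_eq (Fintype.card_fin m)) n

theorem muI_noWitness_le [IsProbabilityMeasure p] [Fintype R] (z : K) {n m k M : ℕ}
    (hmk : m ≤ k) {a : Fin m → Fin n} (ha : a.Injective) {S : NewAtom R ar m → Set (K × K)}
    (hS : ∀ t, MeasurableSet (S t)) {α : ℝ≥0∞} (hα1 : α ≤ 1) (hα : ∀ t, α ≤ atomMeasure z p (S t))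
    (hM : Fintype.card (NewAtom R ar m) ≤ M) :
    muI z p n (noWitness a S) ≤ (1 - α ^ M) ^ (n - k) := by
  have hprod := calc
    α ^ M ≤ α ^ Fintype.card (NewAtom R ar m) := pow_le_pow_right_of_le_one' hα1 hM
    _ = ∏ _t : NewAtom R ar m, α := by simp
    _ ≤ ∏ t, atomMeasure z p (S t) := Finset.prod_le_prod' fun t _ => hα t
  rw [muI_noWitness p z ha hS]
  calc (1 - ∏ t, atomMeasure z p (S t)) ^ Fintype.card {b // b ∉ range a}
      ≤ (1 - α ^ M) ^ Fintype.card {b // b ∉ range a} := by gcongr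
    _ ≤ (1 - α ^ M) ^ (n - k) := pow_le_pow_right_of_le_one' tsub_le_self
        ((Nat.sub_le_sub_left hmk n).trans (le_card_compl_range a))

theorem card_sigma_injective_le {k n : ℕ} (P : Fin k → Type) [∀ m, Fintype (P m)] :
    Fintype.card (Σ m : Fin k, {a : Fin m → Fin n // a.Injective} × P m) ≤
      Fintype.card (Σ m, P m) * (n + 1) ^ k := by
  rw [Fintype.card_sigma, Fintype.card_sigma, Finset.sum_mul]
  gcongr with m
  rw [Fintype.card_prod, mul_comm]
  gcongr
  calc Fintype.card {a : Fin m → Fin n // a.Injective}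
      ≤ Fintype.card (Fin m → Fin n) := Fintype.card_subtype_le _
    _ = n ^ (m : ℕ) := by simp
    _ ≤ (n + 1) ^ k := (Nat.pow_le_pow_left n.le_succ _).trans
      (Nat.pow_le_pow_right n.succ_pos m.2.le)

variable [Fintype R] [DecidableEq R] [Lattice K] [BoundedOrder K] [IsProbabilityMeasure p]
  {k : ℕ} {δ : K} {α : ℝ≥0∞}

theorem muI_not_extPropKD_le (hα1 : α ≤ 1)
    (hmeas : ∀ s isMax, MeasurableSet (signedPair s (extTarget δ isMax)))
    (hα : ∀ s isMax, α ≤ atomMeasure ⊥ p (signedPair s (extTarget δ isMax))) (n : ℕ) :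
    muI (ar := ar) ⊥ p n {ω | ¬ExtPropKD (interpOf ω) k δ} ≤
      Fintype.card (Σ m : Fin k, (NewAtom R ar m → Bool) × Bool) * ((n : ℝ≥0∞) + 1) ^ k *
        (1 - α ^ Finset.univ.sup fun m : Fin k => Fintype.card (NewAtom R ar m)) ^ (n - k) := by
  calc muI ⊥ p n {ω | ¬ExtPropKD (interpOf ω) k δ}
      ≤ ∑ i : Σ m : Fin k, {a : Fin m → Fin n // a.Injective} × (NewAtom R ar m → Bool) × Bool,
          muI ⊥ p n (noWitness i.2.1.1 fun t => signedPair (i.2.2.1 t) (extTarget δ i.2.2.2)) :=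
        (measure_mono (setOf_not_extPropKD_subset k δ)).trans (measure_iUnion_fintype_le _ _)
    _ ≤ ∑ _i : Σ m : Fin k, {a : Fin m → Fin n // a.Injective} × (NewAtom R ar m → Bool) × Bool,
          (1 - α ^ Finset.univ.sup fun m : Fin k => Fintype.card (NewAtom R ar m)) ^ (n - k) :=
        Finset.sum_le_sum fun ⟨m, a, s, isMax⟩ _ => muI_noWitness_le p ⊥ m.2.le a.2
          (fun t => hmeas _ _) hα1 (fun t => hα _ _)
          (Finset.le_sup (f := fun m : Fin k => Fintype.card (NewAtom R ar m)) (Finset.mem_univ m))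
    _ ≤ _ := by
      rw [Finset.sum_const, Finset.card_univ, nsmul_eq_mul]
      gcongr
      exact_mod_cast card_sigma_injective_le _

theorem exists_muI_not_extPropKD_le_geometric (hα0 : 0 < α) (hα1 : α ≤ 1)
    (hmeas : ∀ s isMax, MeasurableSet (signedPair s (extTarget δ isMax)))
    (hα : ∀ s isMax, α ≤ atomMeasure ⊥ p (signedPair s (extTarget δ isMax))) :
    ∃ C q : ℝ≥0∞, C ≠ ⊤ ∧ q < 1 ∧
      ∀ n, muI (ar := ar) ⊥ p n {ω | ¬ExtPropKD (interpOf ω) k δ} ≤ C * q ^ n := by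
  obtain ⟨C, q, hC, hq, hbound⟩ := ENNReal.exists_add_one_pow_mul_pow_sub_le
    (ENNReal.sub_lt_self ENNReal.one_ne_top one_ne_zero
      (pow_ne_zero (Finset.univ.sup fun m : Fin k => Fintype.card (NewAtom R ar m)) hα0.ne')) k
  refine ⟨_ * C, q, ENNReal.mul_ne_top (ENNReal.natCast_ne_top
    (Fintype.card (Σ m : Fin k, (NewAtom R ar m → Bool) × Bool))) hC, hq, fun n => ?_⟩
  refine (muI_not_extPropKD_le p hα1 hmeas hα n).trans ?_
  rw [mul_assoc, mul_assoc]
  exact mul_le_mul_right (hbound n) _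

end RandomInterpretations

theorem measurableSet_Ioc_of_forall_measurableSet_Icc [PartialOrder K] [MeasurableSpace K]
    (hInt : ∀ a b : K, MeasurableSet (Icc a b)) (a b : K) :
    MeasurableSet (Ioc a b) := by
  rw [← Icc_sdiff_left]
  exact (hInt a b).diff (by simpa using hInt a a)

section Targets

variable [Lattice K] [BoundedOrder K] [MeasurableSpace K]

theorem measurableSet_signedPair_extTarget (hInt : ∀ a b : K, MeasurableSet (Icc a b)) (δ : K)
    (s isMax : Bool) : MeasurableSet (signedPair s (extTarget δ isMax)) := by
  have hsing (x : K) : MeasurableSet {x} := by simpa using hInt x x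
  cases isMax
  · exact (hsing ⊥).signedPair s (measurableSet_Ioc_of_forall_measurableSet_Icc hInt ⊥ δ)
  · exact (hsing ⊥).signedPair s (hsing ⊤)

theorem min_le_atomMeasure_signedPair_extTarget (hInt : ∀ a b : K, MeasurableSet (Icc a b))
    {p : Measure K} (hp0 : p {⊥} = 0) (hp1 : 0 < p {⊤}) (δ : K) (s isMax : Bool) :
    2⁻¹ * min (p {⊤}) (p (Ioc ⊥ δ)) ≤ atomMeasure ⊥ p (signedPair s (extTarget δ isMax)) := by
  have hsing (x : K) : MeasurableSet {x} := by simpa using hInt x x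
  cases isMax
  · rw [extTarget, cond_false, atomMeasure_signedPair p (hsing ⊥) s
      (measurableSet_Ioc_of_forall_measurableSet_Icc hInt ⊥ δ) fun h => lt_irrefl _ h.1]
    exact mul_le_mul_right (min_le_right _ _) _
  · rw [extTarget, cond_true, atomMeasure_signedPair p (hsing ⊥) s (hsing ⊤)
      fun h => hp1.ne' (mem_singleton_iff.1 h ▸ hp0)]
    exact mul_le_mul_right (min_le_left _ _) _

theorem PRelevant.measure_Ioc_pos {p : Measure K} {ε δ : K} (hδ : PRelevant p ε δ)
    (hε : EpsBounded p ε) (hp0 : p {⊥} = 0) : 0 < p (Ioc ⊥ δ) := by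
  obtain ⟨hδ0, hlt | ⟨hpε, rfl⟩⟩ := hδ
  · rcases hε with ⟨hpε, -⟩ | ⟨-, -, hpos⟩
    · have hε0 : ε ≠ ⊥ := by rintro rfl; exact hpε.ne' hp0
      exact hpε.trans_le (measure_mono (singleton_subset_iff.2 ⟨bot_lt_iff_ne_bot.2 hε0, hlt.le⟩))
    · exact hpos δ hlt
  · exact hpε.trans_le (measure_mono (singleton_subset_iff.2 ⟨bot_lt_iff_ne_bot.2 hδ0, le_rfl⟩))

end Targets

theorem statement_3_general
    {R : Type} [Fintype R] [DecidableEq R] {ar : R → ℕ}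
    {K : Type} [DistribLattice K] [BoundedOrder K]
    [MeasurableSpace K] (hInt : ∀ a b : K, MeasurableSet (Set.Icc a b))
    (p : Measure K) [IsProbabilityMeasure p]
    (hp0 : p {(⊥ : K)} = 0) (hp1 : 0 < p {(⊤ : K)})
    (ε : K) (hε : EpsBounded p ε)
    (k : ℕ) (δ : K) (hδ : PRelevant p ε δ) :
    ExpConv (fun n =>
      muI (ar := ar) (⊥ : K) p n {ω | ExtPropKD (interpOf ω) k δ}) 1 := by
  set α := 2⁻¹ * min (p {⊤}) (p (Ioc ⊥ δ))
  have hα0 : 0 < α := ENNReal.mul_pos (by simp) (lt_min hp1 (hδ.measure_Ioc_pos hε hp0)).ne'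
  have hα1 : α ≤ 1 := calc
    α ≤ 2⁻¹ * 1 := mul_le_mul_right ((min_le_left _ _).trans prob_le_one) _
    _ ≤ 1 := by norm_num
  obtain ⟨C, q, hC, hq, hbad⟩ := exists_muI_not_extPropKD_le_geometric (ar := ar) (k := k) p hα0
    hα1 (measurableSet_signedPair_extTarget hInt δ)
    (min_le_atomMeasure_signedPair_extTarget hInt hp0 hp1 δ)
  exact expConv_one_of_measure_compl_le _ _ hC hq fun n => by rw [compl_ofPred]; exact hbad n

/-- Let `K` be an infinite lattice semiring with an `ε`-bounded
probability measure `p` on `K⁺` (whose σ-algebra contains all order intervals, and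
with `p[x = 1] > 0`).  Then for every fixed `k` and every `p`-relevant `δ`, random
`K`-interpretations on `[n]` have the `(k,δ)`-extension property with probability
converging to 1 exponentially fast. -/
theorem statement_3
    {R : Type} [Fintype R] [DecidableEq R] {ar : R → ℕ}
    {K : Type} [DistribLattice K] [BoundedOrder K] [Infinite K]
    [MeasurableSpace K] (hInt : ∀ a b : K, MeasurableSet (Set.Icc a b))
    (p : Measure K) [IsProbabilityMeasure p]
    (hp0 : p {(⊥ : K)} = 0) (hp1 : 0 < p {(⊤ : K)})
    (ε : K) (hε : EpsBounded p ε)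
    (k : ℕ) (δ : K) (hδ : PRelevant p ε δ) :
    ExpConv (fun n =>
      muI (ar := ar) (⊥ : K) p n {ω | ExtPropKD (interpOf ω) k δ}) 1 :=
  statement_3_general hInt p hp0 hp1 ε hε k δ hδ
end

section
/- Let (K,+,·,0,1) be an absorptive commutative semiring, K_inf = (K,+,⊓,0,1) the associated lattice semiring, π a K-interpretation and π_inf the same map viewed as a K_inf-interpretation. Then for every formula ψ(x̄) ∈ FO(τ) and every tuple ā: (i) π⟦ψ(ā)⟧ ≤_K π_inf⟦ψ(ā)⟧ in the natural order of K, and (ii) π_inf⟦ψ(ā)⟧ = 1 if and only if π⟦ψ(ā)⟧ = 1. -/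
open MeasureTheory Filter Set
open scoped ENNReal BigOperators

variable {R : Type} {ar : R → ℕ} {A B K : Type}

/-- First-order formulae in negation normal form over the vocabulary `(R, ar)`,
with standard quantifiers, in a context of `i` variables (de Bruijn style:
`ex`/`all` bind the last variable of the extended context). -/
inductive FO (R : Type) (ar : R → ℕ) : ℕ → Type
  | eq   : {i : ℕ} → Fin i → Fin i → FO R ar i
  | ne   : {i : ℕ} → Fin i → Fin i → FO R ar i
  | atom : {i : ℕ} → (r : R) → (Fin (ar r) → Fin i) → Bool → FO R ar i
  | or   : {i : ℕ} → FO R ar i → FO R ar i → FO R ar i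
  | and  : {i : ℕ} → FO R ar i → FO R ar i → FO R ar i
  | ex   : {i : ℕ} → FO R ar (i+1) → FO R ar i
  | all  : {i : ℕ} → FO R ar (i+1) → FO R ar i

/-- Semiring semantics of first-order formulae over a commutative semiring `K`:
`∨`/`∃` are sums, `∧`/`∀` are products. -/
noncomputable def evalS [CommSemiring K] [Fintype A] [DecidableEq A]
    (π : Lit R ar A → K) : {i : ℕ} → FO R ar i → (Fin i → A) → K
  | _, .eq j l, v => if v j = v l then 1 else 0
  | _, .ne j l, v => if v j = v l then 0 else 1
  | _, .atom r as pos, v => π ⟨r, fun j => v (as j), pos⟩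
  | _, .or φ θ, v => evalS π φ v + evalS π θ v
  | _, .and φ θ, v => evalS π φ v * evalS π θ v
  | _, .ex φ, v => ∑ b : A, evalS π φ (Fin.snoc v b)
  | _, .all φ, v => ∏ b : A, evalS π φ (Fin.snoc v b)

/-- Semantics of first-order formulae in a lattice semiring (a bounded distributive
lattice, with `0 = ⊥`, `1 = ⊤`, addition `⊔` and multiplication `⊓`). -/
noncomputable def evalL [DistribLattice K] [BoundedOrder K] [Fintype A] [DecidableEq A]
    (π : Lit R ar A → K) : {i : ℕ} → FO R ar i → (Fin i → A) → K
  | _, .eq j l, v => if v j = v l then ⊤ else ⊥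
  | _, .ne j l, v => if v j = v l then ⊥ else ⊤
  | _, .atom r as pos, v => π ⟨r, fun j => v (as j), pos⟩
  | _, .or φ θ, v => evalL π φ v ⊔ evalL π θ v
  | _, .and φ θ, v => evalL π φ v ⊓ evalL π θ v
  | _, .ex φ, v => Finset.univ.sup fun b : A => evalL π φ (Fin.snoc v b)
  | _, .all φ, v => Finset.univ.inf fun b : A => evalL π φ (Fin.snoc v b)

/-- Let `K` be an absorptive commutative semiring (`a + ab = a`),
whose natural order `a ≤ b ↔ a + b = b` forms a bounded distributive lattice with
supremum `+` (i.e. `⊔ = +`), least element `0` and greatest element `1`, and let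
`K_inf` be the associated lattice semiring (same carrier, multiplication replaced by
`⊓`).  For every `K`-interpretation `π` (also viewed as a `K_inf`-interpretation
`π_inf`), every formula `ψ` and every tuple `ā`:
`π⟦ψ(ā)⟧ ≤ π_inf⟦ψ(ā)⟧`, and `π_inf⟦ψ(ā)⟧ = 1 ↔ π⟦ψ(ā)⟧ = 1`. -/
theorem statement_9
    {R : Type} [Fintype R] [DecidableEq R] {ar : R → ℕ}
    {K : Type} [CommSemiring K] [DistribLattice K] [BoundedOrder K]
    (habs : ∀ a b : K, a + a * b = a)
    (hle : ∀ a b : K, a ≤ b ↔ a + b = b)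
    (hsup : ∀ a b : K, a ⊔ b = a + b)
    (hbot : (⊥ : K) = 0) (htop : (⊤ : K) = 1)
    {A : Type} [Fintype A] [DecidableEq A]
    (π : Lit R ar A → K) (hmd : ModelDefining (0 : K) π)
    {i : ℕ} (ψ : FO R ar i) (v : Fin i → A) :
    evalS π ψ v ≤ evalL π ψ v ∧ (evalL π ψ v = 1 ↔ evalS π ψ v = 1) := by
  clear hmd
  -- basic order facts
  have hdec : ∀ a b : K, a * b ≤ a := by
    intro a b; rw [hle, add_comm]; exact habs a b
  have hle1 : ∀ a : K, a ≤ 1 := fun a => htop ▸ le_top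
  have hmono : ∀ {a b : K} (c : K), a ≤ b → a * c ≤ b * c := by
    intro a b c h; rw [hle] at h ⊢; rw [← add_mul, h]
  have haddmono : ∀ {a b c d : K}, a ≤ b → c ≤ d → a + c ≤ b + d := by
    intro a b c d h1 h2; rw [← hsup, ← hsup]; exact sup_le_sup h1 h2
  have hle_add : ∀ a b : K, a ≤ a + b := by
    intro a b; rw [← hsup]; exact le_sup_left
  have hmul_le_mul : ∀ {a b c d : K}, a ≤ b → c ≤ d → a * c ≤ b * d := by
    intro a b c d h1 h2
    calc a * c ≤ b * c := hmono c h1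
      _ = c * b := mul_comm _ _
      _ ≤ d * b := hmono b h2
      _ = b * d := mul_comm _ _
  have hpow_mono : ∀ {a b : K} (n : ℕ), a ≤ b → a ^ n ≤ b ^ n := by
    intro a b n h
    induction n with
    | zero => simp
    | succ k ih => rw [pow_succ, pow_succ]; exact hmul_le_mul ih h
  have hpow_le : ∀ {a : K} {m n : ℕ}, m ≤ n → a ^ n ≤ a ^ m := by
    intro a m n h
    have : a ^ n = a ^ m * a ^ (n - m) := by
      rw [← pow_add, Nat.add_sub_cancel' h]
    rw [this]; exact hdec _ _
  have hsum_eq : ∀ (s : Finset A) (f : A → K), ∑ b ∈ s, f b = s.sup f := by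
    intro s f
    induction s using Finset.cons_induction with
    | empty => simp [hbot]
    | cons a s ha ih => rw [Finset.sum_cons, Finset.sup_cons, hsup, ih]
  have hsum_le_gen : ∀ (s : Finset ℕ) (f : ℕ → K) (x : K),
      (∀ b ∈ s, f b ≤ x) → ∑ b ∈ s, f b ≤ x := by
    intro s f x h
    induction s using Finset.cons_induction with
    | empty => simpa using hbot ▸ (bot_le : (⊥ : K) ≤ x)
    | cons a s ha ih =>
      rw [Finset.sum_cons]
      have h1 : f a ≤ x := h a (Finset.mem_cons_self _ _)
      have h2 : ∑ b ∈ s, f b ≤ x := ih fun b hb => h b (Finset.mem_cons_of_mem hb)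
      calc f a + ∑ b ∈ s, f b ≤ x + x := haddmono h1 h2
        _ = x ⊔ x := (hsup x x).symm
        _ = x := sup_idem x
  have hsum_mono : ∀ (s : Finset A) (f g : A → K),
      (∀ b ∈ s, f b ≤ g b) → ∑ b ∈ s, f b ≤ ∑ b ∈ s, g b := by
    intro s f g h
    induction s using Finset.cons_induction with
    | empty => simp
    | cons a s ha ih =>
      rw [Finset.sum_cons, Finset.sum_cons]
      exact haddmono (h a (Finset.mem_cons_self _ _))
        (ih fun b hb => h b (Finset.mem_cons_of_mem hb))
  -- pairwise power lemmas
  have hpair : ∀ (a b c d : K) (m n : ℕ), a ^ m ≤ c → b ^ n ≤ d →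
      (a + b) ^ (m + n) ≤ c + d := by
    intro a b c d m n h1 h2
    rw [add_pow]
    apply hsum_le_gen
    intro i hi
    by_cases him : m ≤ i
    · calc a ^ i * b ^ (m + n - i) * (((m + n).choose i : ℕ) : K)
          ≤ a ^ i * b ^ (m + n - i) := hdec _ _
        _ ≤ a ^ i := hdec _ _
        _ ≤ a ^ m := hpow_le him
        _ ≤ c := h1
        _ ≤ c + d := hle_add _ _
    · have hni : n ≤ m + n - i := by omega
      calc a ^ i * b ^ (m + n - i) * (((m + n).choose i : ℕ) : K)
          ≤ a ^ i * b ^ (m + n - i) := hdec _ _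
        _ = b ^ (m + n - i) * a ^ i := mul_comm _ _
        _ ≤ b ^ (m + n - i) := hdec _ _
        _ ≤ b ^ n := hpow_le hni
        _ ≤ d := h2
        _ ≤ c + d := by rw [add_comm]; exact hle_add _ _
  have hpairinf : ∀ (a b c d : K) (m n : ℕ), a ^ m ≤ c → b ^ n ≤ d →
      (a ⊓ b) ^ (m + n) ≤ c * d := by
    intro a b c d m n h1 h2
    rw [pow_add]
    calc (a ⊓ b) ^ m * (a ⊓ b) ^ n
        ≤ a ^ m * b ^ n := hmul_le_mul (hpow_mono m inf_le_left) (hpow_mono n inf_le_right)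
      _ ≤ c * d := hmul_le_mul h1 h2
  -- finset versions
  have hSsum : ∀ (s : Finset A) (L S : A → K), (∀ b, ∃ n, 0 < n ∧ L b ^ n ≤ S b) →
      ∃ n, 0 < n ∧ (∑ b ∈ s, L b) ^ n ≤ ∑ b ∈ s, S b := by
    intro s L S h
    induction s using Finset.cons_induction with
    | empty => exact ⟨1, one_pos, by simp⟩
    | cons a s ha ih =>
      obtain ⟨n, hn, hns⟩ := ih
      obtain ⟨m, hm, hms⟩ := h a
      rw [Finset.sum_cons, Finset.sum_cons]
      exact ⟨m + n, by omega, hpair _ _ _ _ m n hms hns⟩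
  have hSinf : ∀ (s : Finset A) (L S : A → K), (∀ b, ∃ n, 0 < n ∧ L b ^ n ≤ S b) →
      ∃ n, 0 < n ∧ (s.inf L) ^ n ≤ ∏ b ∈ s, S b := by
    intro s L S h
    induction s using Finset.cons_induction with
    | empty => exact ⟨1, one_pos, by simp [htop]⟩
    | cons a s ha ih =>
      obtain ⟨n, hn, hns⟩ := ih
      obtain ⟨m, hm, hms⟩ := h a
      rw [Finset.prod_cons, Finset.inf_cons]
      exact ⟨m + n, by omega, hpairinf _ _ _ _ m n hms hns⟩
  -- part (i)
  have part1 : ∀ {i : ℕ} (ψ : FO R ar i) (v : Fin i → A), evalS π ψ v ≤ evalL π ψ v := by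
    intro i ψ
    induction ψ with
    | eq j l => intro v; simp only [evalS, evalL]; split_ifs <;> simp [htop, hbot]
    | ne j l => intro v; simp only [evalS, evalL]; split_ifs <;> simp [htop, hbot]
    | atom r as pos => intro v; simp [evalS, evalL]
    | or φ θ ih1 ih2 =>
      intro v; simp only [evalS, evalL]; rw [hsup]; exact haddmono (ih1 v) (ih2 v)
    | and φ θ ih1 ih2 =>
      intro v; simp only [evalS, evalL]
      exact le_inf (le_trans (hdec _ _) (ih1 v))
        (le_trans (by rw [mul_comm]; exact hdec _ _) (ih2 v))
    | ex φ ih =>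
      intro v; simp only [evalS, evalL]
      rw [← hsum_eq]
      exact hsum_mono _ _ _ fun b _ => ih _
    | all φ ih =>
      intro v; simp only [evalS, evalL]
      apply Finset.le_inf
      intro b _
      calc ∏ c : A, evalS π φ (Fin.snoc v c)
          = evalS π φ (Fin.snoc v b) * ∏ c ∈ Finset.univ.erase b, evalS π φ (Fin.snoc v c) :=
            (Finset.mul_prod_erase _ _ (Finset.mem_univ b)).symm
        _ ≤ evalS π φ (Fin.snoc v b) := hdec _ _
        _ ≤ evalL π φ (Fin.snoc v b) := ih _
  -- part (ii) key: some power of evalL is below evalS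
  have part2 : ∀ {i : ℕ} (ψ : FO R ar i) (v : Fin i → A),
      ∃ n, 0 < n ∧ (evalL π ψ v) ^ n ≤ evalS π ψ v := by
    intro i ψ
    induction ψ with
    | eq j l =>
      intro v; refine ⟨1, one_pos, ?_⟩
      simp only [evalS, evalL, pow_one]; split_ifs <;> simp [htop, hbot]
    | ne j l =>
      intro v; refine ⟨1, one_pos, ?_⟩
      simp only [evalS, evalL, pow_one]; split_ifs <;> simp [htop, hbot]
    | atom r as pos => intro v; exact ⟨1, one_pos, by simp [evalS, evalL]⟩
    | or φ θ ih1 ih2 =>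
      intro v
      obtain ⟨m, hm, hms⟩ := ih1 v
      obtain ⟨n, hn, hns⟩ := ih2 v
      simp only [evalS, evalL]
      rw [hsup]
      exact ⟨m + n, by omega, hpair _ _ _ _ m n hms hns⟩
    | and φ θ ih1 ih2 =>
      intro v
      obtain ⟨m, hm, hms⟩ := ih1 v
      obtain ⟨n, hn, hns⟩ := ih2 v
      simp only [evalS, evalL]
      exact ⟨m + n, by omega, hpairinf _ _ _ _ m n hms hns⟩
    | ex φ ih =>
      intro v
      simp only [evalS, evalL]
      rw [← hsum_eq]
      exact hSsum _ _ _ fun b => ih (Fin.snoc v b)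
    | all φ ih =>
      intro v
      simp only [evalS, evalL]
      exact hSinf _ _ _ fun b => ih (Fin.snoc v b)
  refine ⟨part1 ψ v, ?_, ?_⟩
  · intro hL
    obtain ⟨n, hn, h⟩ := part2 ψ v
    rw [hL, one_pow] at h
    exact le_antisymm (hle1 _) h
  · intro hS
    have h := part1 ψ v
    rw [hS] at h
    exact le_antisymm (hle1 _) h
end

section
/- Let (K,+,·,0,1) be an absorptive commutative semiring and let ε ∈ K satisfy ε·ε = ε. Then for every formula ψ(x̄) ∈ FO(τ) and every tuple ā: if π_inf⟦ψ(ā)⟧ = ε then also π⟦ψ(ā)⟧ = ε, where π is a K-interpretation and π_inf the same map viewed as an interpretation in the associated lattice semiring K_inf. -/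
open MeasureTheory Filter Set
open scoped ENNReal BigOperators

variable {R : Type} {ar : R → ℕ} {A B K : Type}

/-!
When `⊔ = +` and `⊤ = 1`, `K` is an idempotent semiring in which multiplication is decreasing,
so `a * b ≤ a ⊓ b` and `π⟦ψ⟧ ≤ π_inf⟦ψ⟧` by induction on `ψ`. Conversely meets are bounded
by products only up to powers: `(a ⊓ b) ^ (m + n) ≤ a ^ m * b ^ n`, and joins only by the
binomial estimate `(a + b) ^ (m + n) ≤ a ^ m + b ^ n`, so the same induction gives
`π_inf⟦ψ⟧ ^ n ≤ π⟦ψ⟧` for some `n`. If `π_inf⟦ψ⟧ = ε` is idempotent, then `ε ≤ ε ^ n`,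
which squeezes `π⟦ψ⟧` to `ε`.
-/

abbrev IdemCommSemiring.ofSupEqAdd {α : Type*} [CommSemiring α] [SemilatticeSup α] [OrderBot α]
    (hsup : ∀ a b : α, a ⊔ b = a + b) : IdemCommSemiring α where
  __ := ‹CommSemiring α›
  __ := ‹SemilatticeSup α›
  __ := ‹OrderBot α›
  add_eq_sup a b := (hsup a b).symm

section IdemCommSemiring

variable {α : Type*} [IdemCommSemiring α]

theorem Finset.sum_eq_sup {ι : Type*} (s : Finset ι) (f : ι → α) : ∑ i ∈ s, f i = s.sup f := by
  classical
  induction s using Finset.induction_on with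
  | empty => exact bot_eq_zero.symm
  | insert i s hi ih => rw [Finset.sum_insert hi, Finset.sup_insert, ih, add_eq_sup]

variable (hle_one : ∀ a : α, a ≤ 1)
include hle_one

theorem Finset.prod_le_of_mem {ι : Type*} [DecidableEq ι] {s : Finset ι} (f : ι → α) {i : ι}
    (hi : i ∈ s) : ∏ j ∈ s, f j ≤ f i := by
  rw [← Finset.mul_prod_erase s f hi]
  exact mul_le_of_le_one_right' (hle_one _)

theorem add_pow_add_le_pow_add_pow (a b : α) (m n : ℕ) : (a + b) ^ (m + n) ≤ a ^ m + b ^ n := by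
  rw [add_pow, Finset.sum_eq_sup, Finset.sup_le_iff]
  intro k _
  grw [mul_le_of_le_one_right' (hle_one _)]
  rcases le_or_gt m k with hmk | hkm
  · grw [mul_le_of_le_one_right' (hle_one _), pow_le_pow_right_of_le_one' (hle_one a) hmk]
    exact le_self_add
  · grw [mul_le_of_le_one_left' (hle_one _),
      pow_le_pow_right_of_le_one' (hle_one b) (by omega : n ≤ m + n - k)]
    exact le_add_self

-- The `+ 1` keeps the exponent positive for `s = ∅`, where the left side would be `0 ^ 0 = 1`.
theorem Finset.sum_pow_sum_le_sum_pow {ι : Type*} (s : Finset ι) (f : ι → α) (n : ι → ℕ) :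
    (∑ i ∈ s, f i) ^ (∑ i ∈ s, n i + 1) ≤ ∑ i ∈ s, f i ^ n i := by
  classical
  induction s using Finset.induction_on with
  | empty => simp
  | insert i s hi ih =>
    rw [Finset.sum_insert hi, Finset.sum_insert hi, Finset.sum_insert hi, add_assoc]
    grw [add_pow_add_le_pow_add_pow hle_one, ih]

end IdemCommSemiring

section LatticeSemantics

variable [CommSemiring K] [DistribLattice K] [BoundedOrder K] [Fintype A] [DecidableEq A]
  (hsup : ∀ a b : K, a ⊔ b = a + b) (htop : (⊤ : K) = 1)
include hsup htop

theorem evalS_le_evalL (π : Lit R ar A → K) {i : ℕ} (ψ : FO R ar i) (v : Fin i → A) :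
    evalS π ψ v ≤ evalL π ψ v := by
  let := IdemCommSemiring.ofSupEqAdd hsup
  have hle_one : ∀ a : K, a ≤ 1 := fun a => htop ▸ le_top
  induction ψ with
  | eq j l | ne j l => simp only [evalS, evalL, htop, bot_eq_zero]; rfl
  | atom r as pos => exact le_rfl
  | or φ θ ihφ ihθ => exact (add_le_add (ihφ v) (ihθ v)).trans_eq (hsup _ _).symm
  | and φ θ ihφ ihθ =>
    exact le_inf ((mul_le_of_le_one_right' (hle_one _)).trans (ihφ v))
      ((mul_le_of_le_one_left' (hle_one _)).trans (ihθ v))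
  | ex φ ih =>
    exact (Finset.sum_eq_sup _ _).trans_le (Finset.sup_mono_fun fun b _ => ih _)
  | all φ ih =>
    exact Finset.le_inf fun b _ =>
      (Finset.prod_le_of_mem hle_one _ (Finset.mem_univ b)).trans (ih _)

theorem exists_pow_evalL_le_evalS (π : Lit R ar A → K) {i : ℕ} (ψ : FO R ar i) (v : Fin i → A) :
    ∃ n, evalL π ψ v ^ n ≤ evalS π ψ v := by
  let := IdemCommSemiring.ofSupEqAdd hsup
  have hle_one : ∀ a : K, a ≤ 1 := fun a => htop ▸ le_top
  induction ψ with
  | eq j l | ne j l => exact ⟨1, by simp only [evalS, evalL, htop, bot_eq_zero, pow_one]; rfl⟩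
  | atom r as pos => exact ⟨1, (pow_one _).le⟩
  | or φ θ ihφ ihθ =>
    obtain ⟨m, hm⟩ := ihφ v
    obtain ⟨n, hn⟩ := ihθ v
    refine ⟨m + n, ?_⟩
    simp only [evalS, evalL, hsup]
    grw [add_pow_add_le_pow_add_pow hle_one, hm, hn]
  | and φ θ ihφ ihθ =>
    obtain ⟨m, hm⟩ := ihφ v
    obtain ⟨n, hn⟩ := ihθ v
    refine ⟨m + n, ?_⟩
    rw [evalL, evalS, pow_add]
    exact mul_le_mul' ((pow_le_pow_left' inf_le_left m).trans hm)
      ((pow_le_pow_left' inf_le_right n).trans hn)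
  | ex φ ih =>
    choose n hn using fun b => ih (Fin.snoc v b)
    refine ⟨∑ b, n b + 1, ?_⟩
    rw [evalL, evalS, ← Finset.sum_eq_sup]
    exact (Finset.sum_pow_sum_le_sum_pow hle_one _ _ _).trans (Finset.sum_le_sum fun b _ => hn b)
  | all φ ih =>
    choose n hn using fun b => ih (Fin.snoc v b)
    refine ⟨∑ b, n b, ?_⟩
    rw [evalL, evalS, ← Finset.prod_pow_eq_pow_sum]
    exact Finset.prod_le_prod' fun b _ =>
      (pow_le_pow_left' (Finset.inf_le (Finset.mem_univ b)) _).trans (hn b)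

end LatticeSemantics

theorem statement_10_general
    {R : Type} {ar : R → ℕ}
    {K : Type} [CommSemiring K] [DistribLattice K] [BoundedOrder K]
    (hsup : ∀ a b : K, a ⊔ b = a + b)
    (htop : (⊤ : K) = 1)
    (ε : K) (hid : ε * ε = ε)
    {A : Type} [Fintype A] [DecidableEq A]
    (π : Lit R ar A → K)
    {i : ℕ} (ψ : FO R ar i) (v : Fin i → A) :
    evalL π ψ v = ε → evalS π ψ v = ε := by
  intro hL
  obtain ⟨n, hn⟩ := exists_pow_evalL_le_evalS hsup htop π ψ v
  have hε : ε ≤ ε ^ n := by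
    rcases n with _ | k
    · exact pow_zero ε ▸ htop ▸ le_top
    · exact (IsIdempotentElem.pow_succ_eq k hid).ge
  exact le_antisymm (hL ▸ evalS_le_evalL hsup htop π ψ v) (hε.trans (hL ▸ hn))

/-- Let `K` be an absorptive commutative semiring (with associated
lattice semiring `K_inf` on the natural order), and let `ε ∈ K` be multiplicatively
idempotent (`ε·ε = ε`).  Then for every `K`-interpretation `π`, every formula `ψ`
and every tuple `ā`: if `π_inf⟦ψ(ā)⟧ = ε` then also `π⟦ψ(ā)⟧ = ε`. -/
theorem statement_10
    {R : Type} [Fintype R] [DecidableEq R] {ar : R → ℕ}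
    {K : Type} [CommSemiring K] [DistribLattice K] [BoundedOrder K]
    (habs : ∀ a b : K, a + a * b = a)
    (hle : ∀ a b : K, a ≤ b ↔ a + b = b)
    (hsup : ∀ a b : K, a ⊔ b = a + b)
    (hbot : (⊥ : K) = 0) (htop : (⊤ : K) = 1)
    (ε : K) (hid : ε * ε = ε)
    {A : Type} [Fintype A] [DecidableEq A]
    (π : Lit R ar A → K) (hmd : ModelDefining (0 : K) π)
    {i : ℕ} (ψ : FO R ar i) (v : Fin i → A) :
    evalL π ψ v = ε → evalS π ψ v = ε :=
  statement_10_general hsup htop ε hid π ψ v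
end

section
/- Let g be an ∞-expression over indeterminates X_β for β ∈ Lit_i(τ) and let σ, σ' be maps from the indeterminates to ℕ^∞ such that σ =_𝔹 σ' and, for every indeterminate X_β, either σ(X_β) = σ'(X_β) or σ'(X_β) ≥ 2. Then g[σ] ≥ 2 implies g[σ'] ≥ 2. -/
open MeasureTheory Filter Set
open scoped ENNReal BigOperators

variable {R : Type} {ar : R → ℕ} {A B K : Type}

/-- `∞`-expressions over the indeterminates `X`: formal expressions built from the
indeterminates, constants `0`, `1`, `∞`, binary `+`, `·`, and the unary infinite
power `^∞`. -/
inductive IExp (X : Type) : Type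
  | var : X → IExp X
  | zero : IExp X
  | one : IExp X
  | inf : IExp X
  | add : IExp X → IExp X → IExp X
  | mul : IExp X → IExp X → IExp X
  | ipow : IExp X → IExp X

/-- The infinite power on `ℕ^∞`: `0^∞ = 0`, `1^∞ = 1`, `x^∞ = ∞` for `x ≥ 2`. -/
def infPow (x : ℕ∞) : ℕ∞ := if x = 0 then 0 else if x = 1 then 1 else ⊤

/-- Evaluation of an `∞`-expression in `ℕ^∞ = ℕ ∪ {∞}` under an assignment `σ` of the
indeterminates (with `0·∞ = 0` and `n·∞ = n+∞ = ∞` for `n ≥ 1`). -/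
def IExp.eval {X : Type} (σ : X → ℕ∞) : IExp X → ℕ∞
  | .var x => σ x
  | .zero => 0
  | .one => 1
  | .inf => ⊤
  | .add f g => f.eval σ + g.eval σ
  | .mul f g => f.eval σ * g.eval σ
  | .ipow f => infPow (f.eval σ)

lemma infPow_eq_zero_iff (x : ℕ∞) : infPow x = 0 ↔ x = 0 := by
  unfold infPow; split_ifs <;> simp_all

lemma one_le_of_ne_zero {x : ℕ∞} (h : x ≠ 0) : 1 ≤ x :=
  ENat.one_le_iff_ne_zero.mpr h

/-- Let `g` be an `∞`-expression over the indeterminates `X_β` for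
literals `β ∈ Lit_i(τ)`, and let `σ, σ'` be assignments in `ℕ^∞` such that
`σ =_𝔹 σ'` and for every indeterminate either the values agree or `σ'` takes a value
`≥ 2`.  Then `g[σ] ≥ 2` implies `g[σ'] ≥ 2`. -/
theorem statement_14
    {R : Type} [Fintype R] {ar : R → ℕ} {i : ℕ}
    (g : IExp (Lit R ar (Fin i)))
    (σ σ' : Lit R ar (Fin i) → ℕ∞)
    (hB : ∀ x, σ x = 0 ↔ σ' x = 0)
    (h2 : ∀ x, σ x = σ' x ∨ 2 ≤ σ' x) :
    2 ≤ g.eval σ → 2 ≤ g.eval σ' := by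
  suffices h : (g.eval σ = 0 ↔ g.eval σ' = 0) ∧ (g.eval σ = g.eval σ' ∨ 2 ≤ g.eval σ') by
    intro hg
    rcases h.2 with h | h
    · rwa [← h]
    · exact h
  induction g with
  | var x => exact ⟨hB x, h2 x⟩
  | zero => exact ⟨Iff.rfl, Or.inl rfl⟩
  | one => exact ⟨by simp [IExp.eval], Or.inl rfl⟩
  | inf => exact ⟨by simp [IExp.eval], Or.inl rfl⟩
  | add f g ihf ihg =>
    obtain ⟨hf0, hf⟩ := ihf
    obtain ⟨hg0, hg⟩ := ihg
    constructor
    · simp only [IExp.eval, add_eq_zero]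
      exact and_congr hf0 hg0
    · rcases hf with hf | hf
      · rcases hg with hg | hg
        · exact Or.inl (by simp [IExp.eval, hf, hg])
        · exact Or.inr (le_trans hg (by simp [IExp.eval, le_add_self]))
      · exact Or.inr (le_trans hf (by simp [IExp.eval, self_le_add_right]))
  | mul f g ihf ihg =>
    obtain ⟨hf0, hf⟩ := ihf
    obtain ⟨hg0, hg⟩ := ihg
    constructor
    · simp only [IExp.eval, mul_eq_zero]
      exact or_congr hf0 hg0
    · by_cases hfz : f.eval σ' = 0
      · exact Or.inl (by simp [IExp.eval, hfz, (hf0.2 hfz)])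
      by_cases hgz : g.eval σ' = 0
      · exact Or.inl (by simp [IExp.eval, hgz, (hg0.2 hgz)])
      rcases hf with hf | hf
      · rcases hg with hg | hg
        · exact Or.inl (by simp [IExp.eval, hf, hg])
        · refine Or.inr ?_
          calc (2 : ℕ∞) = 1 * 2 := by norm_num
          _ ≤ f.eval σ' * g.eval σ' := by
              exact mul_le_mul' (one_le_of_ne_zero hfz) hg
      · refine Or.inr ?_
        calc (2 : ℕ∞) = 2 * 1 := by norm_num
        _ ≤ f.eval σ' * g.eval σ' := by
            exact mul_le_mul' hf (one_le_of_ne_zero hgz)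
  | ipow f ihf =>
    obtain ⟨hf0, hf⟩ := ihf
    constructor
    · simp only [IExp.eval, infPow_eq_zero_iff]
      exact hf0
    · by_cases h0 : f.eval σ' = 0
      · exact Or.inl (by simp [IExp.eval, infPow, h0, hf0.2 h0])
      rcases hf with hf | hf
      · exact Or.inl (by simp [IExp.eval, hf])
      · refine Or.inr ?_
        have : infPow (f.eval σ') = ⊤ := by
          simp only [infPow]
          rw [if_neg h0, if_neg (by intro h1; rw [h1] at hf; exact absurd hf (by norm_num))]
        simp [IExp.eval, this]
end
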